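/- arXiv:2603.13742 — 5 statements merged into one kernel-verified Lean document; each statement's English description precedes it below -/
import Mathlib

section
/- Let P and Q be probability measures on a measurable space 𝒴 with P ≪ Q and χ²(P‖Q) := ∫ (dP/dQ − 1)² dQ < ∞, and let μ₀ be a probability measure on a measurable space Ω₀. Then for every n ≥ 0 and every measurable set E ⊆ Ω₀ × 𝒴ⁿ, (μ₀ ⊗ P^{⊗n})(E) ≤ √((μ₀ ⊗ Q^{⊗n})(E)) · (1 + χ²(P‖Q))^{n/2} ≤ √((μ₀ ⊗ Q^{⊗n})(E)) · exp((n/2)·χ²(P‖Q)). -/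
open MeasureTheory Real
open scoped ENNReal

/-!
Under `μ₀ ⊗ Q^{⊗n}` the measure `μ₀ ⊗ P^{⊗n}` has density `ρ(ω, y) = ∏ᵢ (dP/dQ)(yᵢ)`, so by
Cauchy–Schwarz `(μ₀ ⊗ P^{⊗n})(E) = ∫_E ρ ≤ √((μ₀ ⊗ Q^{⊗n})(E)) · ‖ρ‖₂`. The coordinates are
independent under `Q^{⊗n}`, hence `‖ρ‖₂² = (∫ (dP/dQ)² dQ)ⁿ = (1 + χ²(P‖Q))ⁿ`; the exponential
bound is `1 + x ≤ eˣ`.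
-/

lemma Real.rpow_one_add_le_exp_mul {x t : ℝ} (hx : -1 ≤ x) (ht : 0 ≤ t) :
    (1 + x) ^ t ≤ exp (t * x) := by
  calc (1 + x) ^ t ≤ exp x ^ t := rpow_le_rpow (by linarith) (by linarith [add_one_le_exp x]) ht
    _ = exp (t * x) := by rw [← exp_mul, mul_comm]

namespace MeasureTheory

variable {ι : Type*} [Fintype ι] {X : ι → Type*} [∀ i, MeasurableSpace (X i)]

lemma lintegral_fintype_prod_eq_prod {μ : ∀ i, Measure (X i)} [∀ i, IsProbabilityMeasure (μ i)]
    (f : ∀ i, X i → ℝ≥0∞) (hf : ∀ i, Measurable (f i)) :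
    ∫⁻ x, ∏ i, f i (x i) ∂Measure.pi μ = ∏ i, ∫⁻ y, f i y ∂μ i := by
  rw [ProbabilityTheory.lintegral_prod_eq_prod_lintegral_of_indepFun _ _
    (ProbabilityTheory.iIndepFun_pi fun i => (hf i).aemeasurable)
    fun i => (hf i).comp (measurable_pi_apply i)]
  exact Finset.prod_congr rfl fun i _ =>
    (measurePreserving_eval μ i).lintegral_comp (hf i)

lemma Measure.pi_eq_withDensity_prod_rnDeriv {μ ν : ∀ i, Measure (X i)}
    [∀ i, SigmaFinite (μ i)] [∀ i, IsProbabilityMeasure (ν i)] (hμν : ∀ i, μ i ≪ ν i) :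
    Measure.pi μ = (Measure.pi ν).withDensity fun x => ∏ i, (μ i).rnDeriv (ν i) (x i) := by
  refine Measure.pi_eq fun s hs => ?_
  have hbox : (Set.univ.pi s).indicator (fun x => ∏ i, (μ i).rnDeriv (ν i) (x i))
      = fun x => ∏ i, (s i).indicator ((μ i).rnDeriv (ν i)) (x i) := by
    ext x
    classical
    simp only [Set.indicator_apply, Set.mem_univ_pi, Fintype.prod_ite_zero]
  rw [withDensity_apply _ (.univ_pi hs), ← lintegral_indicator (.univ_pi hs), hbox,
    lintegral_fintype_prod_eq_prod _ fun i => (Measure.measurable_rnDeriv _ _).indicator (hs i)]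
  refine Finset.prod_congr rfl fun i _ => ?_
  rw [lintegral_indicator (hs i), ← withDensity_apply _ (hs i),
    Measure.withDensity_rnDeriv_eq _ _ (hμν i)]

lemma withDensity_apply_le_sqrt_mul_sqrt {α : Type*} [MeasurableSpace α] {ν : Measure α}
    {ρ : α → ℝ≥0∞} (hρ : AEMeasurable ρ ν) {s : Set α} (hs : MeasurableSet s) :
    ν.withDensity ρ s ≤ ν s ^ (1 / 2 : ℝ) * (∫⁻ x, ρ x ^ 2 ∂ν) ^ (1 / 2 : ℝ) := by
  have hCS := ENNReal.lintegral_mul_le_Lp_mul_Lq (ν.restrict s) Real.HolderConjugate.two_two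
    (aemeasurable_const (b := 1)) hρ.restrict
  simp only [ENNReal.rpow_two, one_pow, Pi.mul_apply, one_mul, setLIntegral_const] at hCS
  rw [withDensity_apply _ hs]
  refine hCS.trans (mul_le_mul' le_rfl (ENNReal.rpow_le_rpow ?_ (by norm_num)))
  exact lintegral_mono' Measure.restrict_le_self le_rfl

lemma Measure.lintegral_rnDeriv_sq {α : Type*} [MeasurableSpace α] {P Q : Measure α}
    [IsProbabilityMeasure P] [IsProbabilityMeasure Q] (hPQ : P ≪ Q)
    (hχ : Integrable (fun y => ((P.rnDeriv Q y).toReal - 1) ^ 2) Q) :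
    ∫⁻ y, P.rnDeriv Q y ^ 2 ∂Q = ENNReal.ofReal (1 + ∫ y, ((P.rnDeriv Q y).toReal - 1) ^ 2 ∂Q) := by
  have hsq : (fun y => (P.rnDeriv Q y).toReal ^ 2)
      = fun y => ((P.rnDeriv Q y).toReal - 1) ^ 2 + (2 * (P.rnDeriv Q y).toReal - 1) := by
    ext y; ring
  have hlin : Integrable (fun y => 2 * (P.rnDeriv Q y).toReal - 1) Q :=
    (Measure.integrable_toReal_rnDeriv.const_mul 2).sub (integrable_const 1)
  have hfin : ∀ᵐ y ∂Q, P.rnDeriv Q y ^ 2 = ENNReal.ofReal ((P.rnDeriv Q y).toReal ^ 2) := by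
    filter_upwards [Measure.rnDeriv_lt_top P Q] with y hy
    rw [ENNReal.ofReal_pow ENNReal.toReal_nonneg, ENNReal.ofReal_toReal hy.ne]
  rw [lintegral_congr_ae hfin, ← ofReal_integral_eq_lintegral_ofReal
    (hsq ▸ hχ.add hlin) (ae_of_all _ fun y => sq_nonneg _), hsq, integral_add hχ hlin,
    integral_sub (Measure.integrable_toReal_rnDeriv.const_mul 2) (integrable_const 1),
    integral_const_mul, Measure.integral_toReal_rnDeriv hPQ]
  simp only [integral_const, probReal_univ, smul_eq_mul, mul_one]
  ring_nf

end MeasureTheory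

/-- **prefix-measurable χ² change of measure.**
Let `P ≪ Q` be probability measures on `𝒴` with `χ²(P‖Q) := ∫ (dP/dQ − 1)² dQ < ∞`
(finiteness expressed as integrability), and let `μ₀` be a probability measure on `Ω₀`.
Then for every `n ≥ 0` and every measurable `E ⊆ Ω₀ × 𝒴ⁿ`,
`(μ₀ ⊗ P^{⊗n})(E) ≤ √((μ₀ ⊗ Q^{⊗n})(E)) · (1 + χ²(P‖Q))^{n/2}
                  ≤ √((μ₀ ⊗ Q^{⊗n})(E)) · exp((n/2)·χ²(P‖Q))`. -/
theorem stmt3_prefix_chisq_change_of_measure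
    {𝒴 : Type*} [MeasurableSpace 𝒴] {Ω₀ : Type*} [MeasurableSpace Ω₀]
    (P Q : Measure 𝒴) [IsProbabilityMeasure P] [IsProbabilityMeasure Q]
    (μ₀ : Measure Ω₀) [IsProbabilityMeasure μ₀]
    (hPQ : P ≪ Q)
    (hχfin : Integrable (fun y => ((P.rnDeriv Q y).toReal - 1) ^ 2) Q)
    (n : ℕ) (E : Set (Ω₀ × (Fin n → 𝒴))) (hE : MeasurableSet E) :
    ((μ₀.prod (Measure.pi fun _ : Fin n => P)) E).toReal ≤
        Real.sqrt ((μ₀.prod (Measure.pi fun _ : Fin n => Q)) E).toReal *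
          (1 + ∫ y, ((P.rnDeriv Q y).toReal - 1) ^ 2 ∂Q) ^ ((n : ℝ) / 2) ∧
      Real.sqrt ((μ₀.prod (Measure.pi fun _ : Fin n => Q)) E).toReal *
          (1 + ∫ y, ((P.rnDeriv Q y).toReal - 1) ^ 2 ∂Q) ^ ((n : ℝ) / 2) ≤
        Real.sqrt ((μ₀.prod (Measure.pi fun _ : Fin n => Q)) E).toReal *
          Real.exp ((n : ℝ) / 2 * ∫ y, ((P.rnDeriv Q y).toReal - 1) ^ 2 ∂Q) := by
  set χ := ∫ y, ((P.rnDeriv Q y).toReal - 1) ^ 2 ∂Q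
  have hχ : 0 ≤ χ := integral_nonneg fun y => sq_nonneg _
  set νQ := μ₀.prod (Measure.pi fun _ : Fin n => Q)
  set ρ : (Fin n → 𝒴) → ℝ≥0∞ := fun x => ∏ i, P.rnDeriv Q (x i)
  have hρ : AEMeasurable (fun z => ρ z.2) νQ := by fun_prop
  have hdensity : μ₀.prod (Measure.pi fun _ : Fin n => P) = νQ.withDensity fun z => ρ z.2 := by
    rw [Measure.pi_eq_withDensity_prod_rnDeriv fun _ => hPQ, prod_withDensity_right (by fun_prop)]
  have hmoment : ∫⁻ z, ρ z.2 ^ 2 ∂νQ = ENNReal.ofReal (1 + χ) ^ n := by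
    rw [lintegral_prod _ (by fun_prop)]
    simp only [ρ, ← Finset.prod_pow, lintegral_const, measure_univ, mul_one]
    rw [lintegral_fintype_prod_eq_prod (fun _ y => P.rnDeriv Q y ^ 2) fun _ => by fun_prop]
    simp [Measure.lintegral_rnDeriv_sq hPQ hχfin, χ]
  have hkey := withDensity_apply_le_sqrt_mul_sqrt hρ hE
  rw [← hdensity, hmoment, ← ENNReal.rpow_natCast, ← ENNReal.rpow_mul, mul_one_div] at hkey
  refine ⟨?_, mul_le_mul_of_nonneg_left (rpow_one_add_le_exp_mul (by linarith) (by positivity))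
    (sqrt_nonneg _)⟩
  have hfin : νQ E ^ (1 / 2 : ℝ) * ENNReal.ofReal (1 + χ) ^ ((n : ℝ) / 2) ≠ ⊤ := by
    apply ENNReal.mul_ne_top <;> apply ENNReal.rpow_ne_top_of_nonneg (by positivity) <;> simp
  have hreal := ENNReal.toReal_mono hfin hkey
  rwa [ENNReal.toReal_mul, ← ENNReal.toReal_rpow, ← ENNReal.toReal_rpow, ← sqrt_eq_rpow,
    ENNReal.toReal_ofReal (by linarith)] at hreal
end

section
/- Consider the adaptive sampling process driven by a non-anticipating policy, fix an arm j, and for every integer n ≥ 0 let 𝒢_n := σ(U, (X_{i,ℓ})_{i≠j, ℓ≥1}, X_{j,1}, …, X_{j,n}) be the prefix σ-algebra generated by the seed, all other arms' full reward streams, and the first n rewards of arm j. Then for every event E ∈ ℱ_T and every integer n ≥ 0, the event E ∩ {N_j(T) ≤ n} belongs to 𝒢_n. -/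
open MeasureTheory Finset

namespace Stmt6

variable {Ω Ω₀ 𝒴 : Type*} [MeasurableSpace Ω₀] [MeasurableSpace 𝒴] {K : ℕ}

/-- `N_i(t)`: number of pulls of arm `i` up to and including round `t`
(rounds are indexed `1, 2, …`). -/
def pullCount (A : ℕ → Ω → Fin K) (i : Fin K) (t : ℕ) (ω : Ω) : ℕ :=
  ((Finset.Icc 1 t).filter fun s => A s ω = i).card

/-- `R_t := X_{A_t, N_{A_t}(t)}`: the reward observed at round `t`. -/
def reward (X : Fin K → ℕ → Ω → 𝒴) (A : ℕ → Ω → Fin K) (t : ℕ) (ω : Ω) : 𝒴 :=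
  X (A t ω) (pullCount A (A t ω) t ω) ω

/-- The interaction history `(A_1, R_1, …, A_m, R_m)`, encoded as an
sequence with values in `Unit ⊕ (Fin K × 𝒴)` (rounds outside `{1, …, m}` carry the
dummy value `Sum.inl ()`). -/
def history (X : Fin K → ℕ → Ω → 𝒴) (A : ℕ → Ω → Fin K) (m : ℕ) (ω : Ω) :
    ℕ → Unit ⊕ (Fin K × 𝒴) :=
  fun s => if 1 ≤ s ∧ s ≤ m then Sum.inr (A s ω, reward X A s ω) else Sum.inl ()

/-- The policy is non-anticipating on rounds `1, …, T`:
`A_t = ρ_t(U, A_1, R_1, …, A_{t−1}, R_{t−1})` for measurable maps `ρ_t`. -/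
def IsNonAnticipating (U : Ω → Ω₀) (X : Fin K → ℕ → Ω → 𝒴) (A : ℕ → Ω → Fin K)
    (T : ℕ) : Prop :=
  ∃ ρ : ℕ → Ω₀ → (ℕ → Unit ⊕ (Fin K × 𝒴)) → Fin K,
    (∀ t, Measurable fun p : Ω₀ × (ℕ → Unit ⊕ (Fin K × 𝒴)) => ρ t p.1 p.2) ∧
    ∀ t, 1 ≤ t → t ≤ T → ∀ ω, A t ω = ρ t (U ω) (history X A (t - 1) ω)

/-- The transcript σ-algebra `ℱ_t := σ(U, A_1, R_1, …, A_t, R_t)`. -/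
def transcriptSigma (U : Ω → Ω₀) (X : Fin K → ℕ → Ω → 𝒴) (A : ℕ → Ω → Fin K)
    (t : ℕ) : MeasurableSpace Ω :=
  MeasurableSpace.comap U inferInstance ⊔
    ⨆ (s : ℕ) (_ : 1 ≤ s) (_ : s ≤ t),
      (MeasurableSpace.comap (A s) inferInstance ⊔
        MeasurableSpace.comap (reward X A s) inferInstance)

/-- The prefix σ-algebra
`𝒢_n := σ(U, (X_{i,ℓ})_{i≠j, ℓ≥1}, X_{j,1}, …, X_{j,n})`. -/
def prefixSigma (U : Ω → Ω₀) (X : Fin K → ℕ → Ω → 𝒴) (j : Fin K) (n : ℕ) :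
    MeasurableSpace Ω :=
  MeasurableSpace.comap U inferInstance ⊔
    (⨆ (i : Fin K) (_ : i ≠ j) (ℓ : ℕ) (_ : 1 ≤ ℓ),
      MeasurableSpace.comap (X i ℓ) inferInstance) ⊔
    ⨆ (ℓ : ℕ) (_ : 1 ≤ ℓ) (_ : ℓ ≤ n), MeasurableSpace.comap (X j ℓ) inferInstance

set_option linter.unusedSectionVars false

-- aux lemmas
lemma pullCount_zero (A : ℕ → Ω → Fin K) (i : Fin K) (ω : Ω) : pullCount A i 0 ω = 0 := by
  simp [pullCount]

lemma Icc_succ (m : ℕ) : Finset.Icc 1 (m + 1) = insert (m + 1) (Finset.Icc 1 m) := by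
  ext s; simp; omega

lemma pullCount_succ (A : ℕ → Ω → Fin K) (i : Fin K) (m : ℕ) (ω : Ω) :
    pullCount A i (m + 1) ω = pullCount A i m ω + if A (m + 1) ω = i then 1 else 0 := by
  unfold pullCount
  rw [Icc_succ, Finset.filter_insert]
  by_cases h : A (m + 1) ω = i
  · rw [if_pos h, if_pos h, Finset.card_insert_of_notMem (by simp)]
  · rw [if_neg h, if_neg h, Nat.add_zero]

lemma pullCount_mono (A : ℕ → Ω → Fin K) (i : Fin K) (ω : Ω) {s t : ℕ} (h : s ≤ t) :
    pullCount A i s ω ≤ pullCount A i t ω := by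
  apply Finset.card_le_card
  apply Finset.filter_subset_filter
  exact Finset.Icc_subset_Icc le_rfl h

lemma pullCount_pos (A : ℕ → Ω → Fin K) {t : ℕ} (ht : 1 ≤ t) (ω : Ω) :
    1 ≤ pullCount A (A t ω) t ω := by
  rw [Nat.one_le_iff_ne_zero, ← Nat.pos_iff_ne_zero, pullCount, Finset.card_pos]
  exact ⟨t, by simp [ht]⟩

lemma measurable_uncurry_eval {ι : Type*} [Countable ι] {m : MeasurableSpace Ω}
    {β : Type*} [MeasurableSpace β]
    {Y : ι → Ω → β} (hY : ∀ i, Measurable (Y i)) {h : Ω → ι}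
    (hh : ∀ i, MeasurableSet (h ⁻¹' {i})) :
    Measurable fun ω => Y (h ω) ω := by
  intro S hS
  have hset : (fun ω => Y (h ω) ω) ⁻¹' S = ⋃ i, h ⁻¹' {i} ∩ Y i ⁻¹' S := by
    ext ω
    simp only [Set.mem_preimage, Set.mem_iUnion, Set.mem_inter_iff, Set.mem_singleton_iff]
    constructor
    · intro hx; exact ⟨h ω, rfl, hx⟩
    · rintro ⟨i, rfl, hx⟩; exact hx
  rw [hset]
  exact MeasurableSet.iUnion fun i => (hh i).inter (hY i hS)

noncomputable def step (ρ : ℕ → Ω₀ → (ℕ → Unit ⊕ (Fin K × 𝒴)) → Fin K)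
    (U : Ω → Ω₀) (X' : Fin K → ℕ → Ω → 𝒴) :
    ℕ → Ω → ((ℕ → Unit ⊕ (Fin K × 𝒴)) × (Fin K → ℕ))
  | 0 => fun _ => (fun _ => Sum.inl (), fun _ => 0)
  | (m + 1) => fun ω =>
      let p := step ρ U X' m ω
      let a := ρ (m + 1) (U ω) p.1
      (fun s => if s = m + 1 then Sum.inr (a, X' a (p.2 a + 1) ω) else p.1 s,
       fun i => p.2 i + if i = a then 1 else 0)

lemma step_succ (ρ : ℕ → Ω₀ → (ℕ → Unit ⊕ (Fin K × 𝒴)) → Fin K)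
    (U : Ω → Ω₀) (X' : Fin K → ℕ → Ω → 𝒴) (m : ℕ) (ω : Ω) :
    step ρ U X' (m + 1) ω =
      (fun s => if s = m + 1 then
          Sum.inr (ρ (m + 1) (U ω) (step ρ U X' m ω).1,
            X' (ρ (m + 1) (U ω) (step ρ U X' m ω).1)
              ((step ρ U X' m ω).2 (ρ (m + 1) (U ω) (step ρ U X' m ω).1) + 1) ω)
        else (step ρ U X' m ω).1 s,
       fun i => (step ρ U X' m ω).2 i +
         if i = ρ (m + 1) (U ω) (step ρ U X' m ω).1 then 1 else 0) := rfl

lemma measurable_step {m0 : MeasurableSpace Ω}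
    {ρ : ℕ → Ω₀ → (ℕ → Unit ⊕ (Fin K × 𝒴)) → Fin K}
    (hρ : ∀ t, Measurable fun p : Ω₀ × (ℕ → Unit ⊕ (Fin K × 𝒴)) => ρ t p.1 p.2)
    {U : Ω → Ω₀} (hU : Measurable U)
    {X' : Fin K → ℕ → Ω → 𝒴} (hX' : ∀ i ℓ, Measurable (X' i ℓ)) (m : ℕ) :
    Measurable (step ρ U X' m) := by
  induction m with
  | zero => exact measurable_const
  | succ m ih =>
    have hp1 : Measurable fun ω => (step ρ U X' m ω).1 := ih.fst
    have hp2 : Measurable fun ω => (step ρ U X' m ω).2 := ih.snd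
    have ha : Measurable fun ω => ρ (m + 1) (U ω) (step ρ U X' m ω).1 :=
      (hρ (m + 1)).comp (hU.prodMk hp1)
    have haS : ∀ i : Fin K, MeasurableSet ((fun ω => ρ (m + 1) (U ω) (step ρ U X' m ω).1) ⁻¹' {i}) :=
      fun i => ha (measurableSet_singleton i)
    have hcnt : Measurable fun ω => (step ρ U X' m ω).2 (ρ (m + 1) (U ω) (step ρ U X' m ω).1) + 1 := by
      apply Measurable.add_const
      exact measurable_uncurry_eval (Y := fun i ω => (step ρ U X' m ω).2 i)
        (fun i => hp2.eval) haS
    have hYa : Measurable fun ω =>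
        X' (ρ (m + 1) (U ω) (step ρ U X' m ω).1)
          ((step ρ U X' m ω).2 (ρ (m + 1) (U ω) (step ρ U X' m ω).1) + 1) ω := by
      apply measurable_uncurry_eval (ι := Fin K × ℕ) (Y := fun p => X' p.1 p.2)
        (fun p => hX' p.1 p.2)
        (h := fun ω => (ρ (m + 1) (U ω) (step ρ U X' m ω).1,
          (step ρ U X' m ω).2 (ρ (m + 1) (U ω) (step ρ U X' m ω).1) + 1))
      intro p
      have : (fun ω => (ρ (m + 1) (U ω) (step ρ U X' m ω).1,
          (step ρ U X' m ω).2 (ρ (m + 1) (U ω) (step ρ U X' m ω).1) + 1)) ⁻¹' {p}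
          = _ := rfl
      exact (ha.prodMk hcnt) (measurableSet_singleton p)
    apply Measurable.prodMk
    · rw [measurable_pi_iff]
      intro s
      by_cases hs : s = m + 1
      · subst hs
        simp only [step_succ, if_pos rfl]
        exact measurable_inr.comp (ha.prodMk hYa)
      · simp only [step_succ, if_neg hs]
        exact hp1.eval
    · rw [measurable_pi_iff]
      intro i
      apply Measurable.add hp2.eval
      have hset : {ω | i = ρ (m + 1) (U ω) (step ρ U X' m ω).1}
          = (fun ω => ρ (m + 1) (U ω) (step ρ U X' m ω).1) ⁻¹' {i} := by
        ext ω; simp [eq_comm]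
      exact Measurable.ite (by rw [hset]; exact haS i) measurable_const measurable_const


lemma step_zero (ρ : ℕ → Ω₀ → (ℕ → Unit ⊕ (Fin K × 𝒴)) → Fin K)
    (U : Ω → Ω₀) (X' : Fin K → ℕ → Ω → 𝒴) (ω : Ω) :
    step ρ U X' 0 ω = (fun _ => Sum.inl (), fun _ => 0) := rfl

lemma step_agree
    {U : Ω → Ω₀} {X : Fin K → ℕ → Ω → 𝒴} {A : ℕ → Ω → Fin K} {T : ℕ}
    (ρ : ℕ → Ω₀ → (ℕ → Unit ⊕ (Fin K × 𝒴)) → Fin K)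
    (hρeq : ∀ t, 1 ≤ t → t ≤ T → ∀ ω, A t ω = ρ t (U ω) (history X A (t - 1) ω))
    {j : Fin K} {n : ℕ} (X' : Fin K → ℕ → Ω → 𝒴)
    (hX'eq : ∀ i ℓ (ω : Ω), 1 ≤ ℓ → (i = j → ℓ ≤ n) → X' i ℓ ω = X i ℓ ω)
    (ω : Ω) :
    ∀ m, m ≤ T → (pullCount A j m ω ≤ n ∨ (step ρ U X' m ω).2 j ≤ n) →
      (step ρ U X' m ω).1 = history X A m ω ∧
        ∀ i, (step ρ U X' m ω).2 i = pullCount A i m ω := by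
  intro m
  induction m with
  | zero =>
    intro _ _
    refine ⟨funext fun s => ?_, fun i => ?_⟩
    · rw [step_zero]
      simp only [history]
      rw [if_neg (by omega)]
    · rw [step_zero, pullCount_zero]
  | succ m ih =>
    intro hmT hdisj
    have hm : m ≤ T := le_trans (Nat.le_succ m) hmT
    have hdisj' : pullCount A j m ω ≤ n ∨ (step ρ U X' m ω).2 j ≤ n := by
      rcases hdisj with h | h
      · exact Or.inl (le_trans (pullCount_mono A j ω (Nat.le_succ m)) h)
      · refine Or.inr (le_trans ?_ h)
        rw [step_succ]
        exact Nat.le_add_right _ _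
    obtain ⟨H1, H2⟩ := ih hm hdisj'
    have ha : A (m + 1) ω = ρ (m + 1) (U ω) ((step ρ U X' m ω).1) := by
      rw [hρeq (m + 1) (Nat.le_add_left 1 m) hmT ω, Nat.add_sub_cancel, H1]
    have Hc : ∀ i, (step ρ U X' (m + 1) ω).2 i = pullCount A i (m + 1) ω := by
      intro i
      rw [step_succ]
      simp only
      rw [pullCount_succ, H2 i, ← ha]
      by_cases h : A (m + 1) ω = i
      · rw [if_pos h.symm, if_pos h]
      · rw [if_neg (fun hh => h hh.symm), if_neg h]
    have hcj : pullCount A j (m + 1) ω ≤ n := by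
      rcases hdisj with h | h
      · exact h
      · rw [← Hc j]; exact h
    refine ⟨funext fun s => ?_, Hc⟩
    rw [step_succ]
    simp only
    by_cases hs : s = m + 1
    · subst hs
      rw [if_pos rfl]
      simp only [history]
      rw [if_pos ⟨Nat.le_add_left 1 m, le_rfl⟩]
      have hpc : pullCount A (A (m + 1) ω) (m + 1) ω
          = pullCount A (A (m + 1) ω) m ω + 1 := by
        rw [pullCount_succ, if_pos rfl]
      rw [← ha, H2, ← hpc]
      simp only [reward]
      rw [hX'eq (A (m + 1) ω) (pullCount A (A (m + 1) ω) (m + 1) ω) ω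
        (pullCount_pos A (Nat.le_add_left 1 m) ω)
        (fun hj => by rw [hj] at hpc ⊢; exact hcj)]
    · rw [if_neg hs, H1]
      simp only [history]
      by_cases hmem : 1 ≤ s ∧ s ≤ m
      · rw [if_pos hmem, if_pos ⟨hmem.1, le_trans hmem.2 (Nat.le_succ m)⟩]
      · rw [if_neg hmem, if_neg (by omega)]

/-- **budget-event measurability.** For a non-anticipating policy,
any event `E ∈ ℱ_T` and any `n ≥ 0`, the event `E ∩ {N_j(T) ≤ n}` belongs to the
prefix σ-algebra `𝒢_n`. -/
theorem stmt6_budget_event_measurable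
    (U : Ω → Ω₀) (X : Fin K → ℕ → Ω → 𝒴) (A : ℕ → Ω → Fin K) (T : ℕ) (j : Fin K)
    (hpolicy : IsNonAnticipating U X A T)
    (E : Set Ω) (hE : MeasurableSet[transcriptSigma U X A T] E) (n : ℕ) :
    MeasurableSet[prefixSigma U X j n] (E ∩ {ω | pullCount A j T ω ≤ n}) := by
  obtain ⟨ρ, hρ, hρeq⟩ := hpolicy
  rcases isEmpty_or_nonempty Ω with hΩ | hΩ
  · have hempty : E ∩ {ω | pullCount A j T ω ≤ n} = ∅ := Set.eq_empty_of_isEmpty _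
    rw [hempty]
    exact @MeasurableSet.empty _ (prefixSigma U X j n)
  · haveI : Nonempty 𝒴 := ⟨X j 1 (Classical.arbitrary Ω)⟩
    set 𝒢 := prefixSigma U X j n with h𝒢
    set G := {ω | pullCount A j T ω ≤ n} with hG
    set X' : Fin K → ℕ → Ω → 𝒴 :=
      fun i ℓ ω => if ℓ = 0 ∨ (i = j ∧ n < ℓ) then Classical.arbitrary 𝒴 else X i ℓ ω
      with hX'def
    have hX'eq : ∀ i ℓ (ω : Ω), 1 ≤ ℓ → (i = j → ℓ ≤ n) → X' i ℓ ω = X i ℓ ω := by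
      intro i ℓ ω h1 h2
      rw [hX'def]
      simp only
      rw [if_neg]
      push_neg
      exact ⟨by omega, fun hij => (h2 hij)⟩
    have hU𝒢 : Measurable[𝒢] U := by
      rw [measurable_iff_comap_le, h𝒢]
      exact le_sup_of_le_left le_sup_left
    have hX'meas : ∀ i ℓ, Measurable[𝒢] (X' i ℓ) := by
      intro i ℓ
      by_cases hc : ℓ = 0 ∨ (i = j ∧ n < ℓ)
      · have hconst : X' i ℓ = fun _ => Classical.arbitrary 𝒴 := by
          funext ω; rw [hX'def]; simp only; rw [if_pos hc]
        rw [hconst]; exact measurable_const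
      · have hXeq : X' i ℓ = X i ℓ := by
          funext ω; rw [hX'def]; simp only; rw [if_neg hc]
        rw [hXeq, measurable_iff_comap_le, h𝒢]
        push_neg at hc
        obtain ⟨h0, hc2⟩ := hc
        by_cases hij : i = j
        · subst hij
          exact le_sup_of_le_right
            (le_iSup_of_le ℓ (le_iSup_of_le (by omega) (le_iSup_of_le (hc2 rfl) le_rfl)))
        · exact le_sup_of_le_left (le_sup_of_le_right
            (le_iSup_of_le i (le_iSup_of_le hij
              (le_iSup_of_le ℓ (le_iSup_of_le (by omega) le_rfl)))))
    have hstepm : ∀ m, Measurable[𝒢] (step ρ U X' m) :=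
      fun m => measurable_step hρ hU𝒢 hX'meas m
    have agree := step_agree ρ hρeq X' hX'eq
    have hGeq : G = {ω | (step ρ U X' T ω).2 j ≤ n} := by
      ext ω
      simp only [hG, Set.mem_setOf_eq]
      constructor
      · intro h; rw [(agree ω T le_rfl (Or.inl h)).2 j]; exact h
      · intro h; rw [← (agree ω T le_rfl (Or.inr h)).2 j]; exact h
    have hG𝒢 : MeasurableSet[𝒢] G := by
      rw [hGeq]
      exact ((hstepm T).snd.eval (a := j)) ((Set.to_countable (Set.Iic n)).measurableSet)
    have hA''meas : ∀ t, Measurable[𝒢] fun ω => ρ t (U ω) ((step ρ U X' (t - 1) ω).1) :=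
      fun t => (hρ t).comp (hU𝒢.prodMk (hstepm (t - 1)).fst)
    have hR''meas : ∀ t, Measurable[𝒢] fun ω =>
        X' (ρ t (U ω) ((step ρ U X' (t - 1) ω).1))
          ((step ρ U X' t ω).2 (ρ t (U ω) ((step ρ U X' (t - 1) ω).1))) ω := by
      intro t
      have hcnt : Measurable[𝒢] fun ω =>
          (step ρ U X' t ω).2 (ρ t (U ω) ((step ρ U X' (t - 1) ω).1)) :=
        measurable_uncurry_eval (Y := fun i ω => (step ρ U X' t ω).2 i)
          (fun i => (hstepm t).snd.eval)
          (fun i => (hA''meas t) (measurableSet_singleton i))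
      exact measurable_uncurry_eval (ι := Fin K × ℕ) (Y := fun p => X' p.1 p.2)
        (fun p => hX'meas p.1 p.2)
        (h := fun ω => (ρ t (U ω) ((step ρ U X' (t - 1) ω).1),
          (step ρ U X' t ω).2 (ρ t (U ω) ((step ρ U X' (t - 1) ω).1))))
        (fun p => ((hA''meas t).prodMk hcnt) (measurableSet_singleton p))
    have hAagree : ∀ t, 1 ≤ t → t ≤ T → ∀ ω ∈ G,
        A t ω = ρ t (U ω) ((step ρ U X' (t - 1) ω).1) := by
      intro t h1 h2 ω hω
      have hpc : pullCount A j (t - 1) ω ≤ n :=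
        le_trans (pullCount_mono A j ω (by omega)) hω
      rw [hρeq t h1 h2 ω, (agree ω (t - 1) (by omega) (Or.inl hpc)).1]
    have hRagree : ∀ t, 1 ≤ t → t ≤ T → ∀ ω ∈ G,
        reward X A t ω = X' (ρ t (U ω) ((step ρ U X' (t - 1) ω).1))
          ((step ρ U X' t ω).2 (ρ t (U ω) ((step ρ U X' (t - 1) ω).1))) ω := by
      intro t h1 h2 ω hω
      have hA := hAagree t h1 h2 ω hω
      have hpc : pullCount A j t ω ≤ n := le_trans (pullCount_mono A j ω h2) hω
      have H2 := (agree ω t h2 (Or.inl hpc)).2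
      rw [← hA, H2 (A t ω)]
      simp only [reward]
      rw [hX'eq (A t ω) (pullCount A (A t ω) t ω) ω (pullCount_pos A h1 ω)
        (fun hj => by rw [hj]; exact hpc)]
    let D : MeasurableSpace Ω :=
      { MeasurableSet' := fun s => MeasurableSet[𝒢] (s ∩ G)
        measurableSet_empty := by simp
        measurableSet_compl := by
          intro s hs
          have hcompl : sᶜ ∩ G = G \ (s ∩ G) := by
            ext ω; simp only [Set.mem_inter_iff, Set.mem_compl_iff, Set.mem_diff]; tauto
          rw [hcompl]
          exact hG𝒢.diff hs
        measurableSet_iUnion := by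
          intro f hf
          rw [Set.iUnion_inter]
          exact MeasurableSet.iUnion hf }
    have hle : transcriptSigma U X A T ≤ D := by
      rw [transcriptSigma]
      apply sup_le
      · intro s hs
        obtain ⟨S, hS, rfl⟩ := hs
        show MeasurableSet[𝒢] (U ⁻¹' S ∩ G)
        exact (hU𝒢 hS).inter hG𝒢
      · refine iSup_le fun t => iSup_le fun h1 => iSup_le fun h2 => sup_le ?_ ?_
        · intro s hs
          obtain ⟨S, hS, rfl⟩ := hs
          show MeasurableSet[𝒢] (A t ⁻¹' S ∩ G)
          have hset : A t ⁻¹' S ∩ G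
              = (fun ω => ρ t (U ω) ((step ρ U X' (t - 1) ω).1)) ⁻¹' S ∩ G := by
            ext ω
            simp only [Set.mem_inter_iff, Set.mem_preimage]
            constructor
            · rintro ⟨hx, hω⟩
              exact ⟨by rw [← hAagree t h1 h2 ω hω]; exact hx, hω⟩
            · rintro ⟨hx, hω⟩
              exact ⟨by rw [hAagree t h1 h2 ω hω]; exact hx, hω⟩
          rw [hset]
          exact ((hA''meas t) hS).inter hG𝒢
        · intro s hs
          obtain ⟨S, hS, rfl⟩ := hs
          show MeasurableSet[𝒢] (reward X A t ⁻¹' S ∩ G)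
          have hset : reward X A t ⁻¹' S ∩ G
              = (fun ω => X' (ρ t (U ω) ((step ρ U X' (t - 1) ω).1))
                  ((step ρ U X' t ω).2 (ρ t (U ω) ((step ρ U X' (t - 1) ω).1))) ω) ⁻¹' S
                ∩ G := by
            ext ω
            simp only [Set.mem_inter_iff, Set.mem_preimage]
            constructor
            · rintro ⟨hx, hω⟩
              exact ⟨by rw [← hRagree t h1 h2 ω hω]; exact hx, hω⟩
            · rintro ⟨hx, hω⟩
              exact ⟨by rw [hRagree t h1 h2 ω hω]; exact hx, hω⟩
          rw [hset]
          exact ((hR''meas t) hS).inter hG𝒢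
    exact hle E hE


end Stmt6
end

section
/- Let K ≥ 2 be even, let X be uniformly distributed on the set {x ∈ {0,1}^K : Σ_i x_i = K/2}, and let Y be any {0,1}^K-valued random variable on the same probability space. Suppose δ ∈ [0, 1/2] satisfies (1/K)·Σ_{i=1}^K P(X_i ≠ Y_i) ≤ δ. Then the mutual information (in nats) satisfies I[X ; Y] ≥ K·(log 2 − h(δ)) − (1/2)·log(2K), where h is the binary entropy function in nats. -/
open MeasureTheory Real Finset

/-- Shannon entropy (in nats) of a finite-valued random variable `X` under the
probability measure `μ`. -/
noncomputable def shannonEntropy {Ω : Type*} [MeasurableSpace Ω] {α : Type*} [Fintype α]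
    (μ : Measure Ω) (X : Ω → α) : ℝ :=
  ∑ x : α, Real.negMulLog ((μ (X ⁻¹' {x})).toReal)

/-- Shannon mutual information (in nats): `I[X ; Y] := H[X] + H[Y] − H[(X, Y)]`. -/
noncomputable def mutualInfo {Ω : Type*} [MeasurableSpace Ω]
    {α β : Type*} [Fintype α] [Fintype β]
    (μ : Measure Ω) (X : Ω → α) (Y : Ω → β) : ℝ :=
  shannonEntropy μ X + shannonEntropy μ Y - shannonEntropy μ (fun ω => (X ω, Y ω))

/-!
`X` is uniform on a set of size `C(K, K/2)`, and `16ⁿ ≤ 4n·C(2n, n)²` gives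
`H[X] = log C(K, K/2) ≥ K log 2 − ½ log (2K)`. With `Z := X xor Y` coordinatewise,
`(X, Y) ↦ (Y, Z)` is injective, so by subadditivity
`H[X, Y] = H[Y, Z] ≤ H[Y] + ∑ᵢ H[Zᵢ] = H[Y] + ∑ᵢ h(P(Xᵢ ≠ Yᵢ))`, and concavity of `h` together
with its monotonicity on `[0, 1/2]` bounds the last sum by `K·h(δ)`. Hence
`I[X ; Y] = H[X] + H[Y] − H[X, Y] ≥ H[X] − K·h(δ)`.
-/

namespace Nat

theorem sixteen_pow_le_four_mul_mul_centralBinom_sq {n : ℕ} (hn : 1 ≤ n) :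
    16 ^ n ≤ 4 * n * n.centralBinom ^ 2 := by
  induction n, hn using Nat.le_induction with
  | base => decide
  | succ m _ ih =>
    have hrec := Nat.succ_mul_centralBinom_succ m
    refine Nat.le_of_mul_le_mul_left ?_ m.succ_pos
    calc (m + 1) * 16 ^ (m + 1) = 16 * (m + 1) * 16 ^ m := by ring
      _ ≤ 16 * (m + 1) * (4 * m * m.centralBinom ^ 2) := by gcongr
      _ = 16 * (4 * m * (m + 1)) * m.centralBinom ^ 2 := by ring
      _ ≤ 16 * (2 * m + 1) ^ 2 * m.centralBinom ^ 2 := by gcongr; nlinarith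
      _ = 4 * (2 * (2 * m + 1) * m.centralBinom) ^ 2 := by ring
      _ = (m + 1) * (4 * (m + 1) * (m + 1).centralBinom ^ 2) := by rw [← hrec]; ring

end Nat

theorem card_filter_card_eq_true {ι : Type*} [Fintype ι] [DecidableEq ι] (k : ℕ) :
    #{x : ι → Bool | #{i | x i = true} = k} = (Fintype.card ι).choose k := by
  rw [← card_univ, ← card_powersetCard]
  refine card_nbij' (fun x => ({i | x i = true} : Finset ι)) (fun s i => decide (i ∈ s))
    ?_ ?_ ?_ ?_
  · intro x hx; simpa using hx
  · intro s hs; simp_all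
  · intro x _; funext i; simp
  · intro s _; ext i; simp

theorem mul_log_two_sub_half_log_le_log_choose_half {K : ℕ} (hK : Even K) :
    K * log 2 - 1 / 2 * log (2 * K) ≤ log (K.choose (K / 2)) := by
  obtain ⟨n, rfl⟩ := hK
  rcases Nat.eq_zero_or_pos n with rfl | hn
  · simp
  have hbound : (16 : ℝ) ^ n ≤ 4 * n * n.centralBinom ^ 2 := by
    exact_mod_cast Nat.sixteen_pow_le_four_mul_mul_centralBinom_sq hn
  have hC : (0 : ℝ) < n.centralBinom := by exact_mod_cast n.centralBinom_pos
  have hlog := log_le_log (by positivity) hbound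
  rw [log_mul (by positivity) (by positivity), log_pow, log_pow,
    show (16 : ℝ) = 2 ^ 4 by norm_num, log_pow] at hlog
  rw [← two_mul, Nat.mul_div_cancel_left n two_pos, ← Nat.centralBinom_eq_two_mul_choose]
  push_cast at hlog ⊢
  rw [show (2 : ℝ) * (2 * n) = 4 * n by ring]
  linarith

theorem mul_log_sub_mul_log_le_sub {r s : ℝ} (hr : 0 ≤ r) (hs : 0 ≤ s) (hsr : s = 0 → r = 0) :
    r * log s - r * log r ≤ s - r := by
  rcases hr.eq_or_lt with rfl | hr
  · simpa using hs
  have hs : 0 < s := hs.lt_of_ne fun h => hr.ne' (hsr h.symm)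
  have h := mul_le_mul_of_nonneg_left (log_le_sub_one_of_pos (div_pos hs hr)) hr.le
  rw [log_div hs.ne' hr.ne', mul_sub_one, mul_div_cancel₀ _ hr.ne'] at h
  linarith

theorem sum_mul_log_le_sum_mul_log {ι : Type*} [Fintype ι] {r s : ι → ℝ} (hr : ∀ i, 0 ≤ r i)
    (hs : ∀ i, 0 ≤ s i) (hsr : ∀ i, s i = 0 → r i = 0) (hsum : ∑ i, s i ≤ ∑ i, r i) :
    ∑ i, r i * log (s i) ≤ ∑ i, r i * log (r i) := by
  have h : ∑ i, (r i * log (s i) - r i * log (r i)) ≤ ∑ i, (s i - r i) :=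
    sum_le_sum fun i _ => mul_log_sub_mul_log_le_sub (hr i) (hs i) (hsr i)
  rw [sum_sub_distrib, sum_sub_distrib] at h
  linarith

theorem sum_negMulLog_le_sum_negMulLog_marginals {α β : Type*} [Fintype α] [Fintype β]
    {r : α × β → ℝ} (hr : ∀ c, 0 ≤ r c) (hr1 : ∑ c, r c = 1) :
    ∑ c, negMulLog (r c) ≤
      ∑ a, negMulLog (∑ b, r (a, b)) + ∑ b, negMulLog (∑ a, r (a, b)) := by
  set p : α → ℝ := fun a => ∑ b, r (a, b)
  set q : β → ℝ := fun b => ∑ a, r (a, b)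
  have hrp : ∀ a b, r (a, b) ≤ p a := fun a b =>
    single_le_sum (f := fun b => r (a, b)) (fun b _ => hr _) (mem_univ b)
  have hrq : ∀ a b, r (a, b) ≤ q b := fun a b =>
    single_le_sum (f := fun a => r (a, b)) (fun a _ => hr _) (mem_univ a)
  have hp : ∑ a, negMulLog (p a) = -∑ c, r c * log (p c.1) := by
    simp only [negMulLog, Fintype.sum_prod_type, p, sum_mul, sum_neg_distrib, neg_mul]
  have hq : ∑ b, negMulLog (q b) = -∑ c, r c * log (q c.2) := by
    simp only [negMulLog, Fintype.sum_prod_type_right, q, sum_mul, sum_neg_distrib, neg_mul]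
  have hlog : ∀ c, r c * log (p c.1 * q c.2) = r c * log (p c.1) + r c * log (q c.2) := by
    rintro ⟨a, b⟩
    rcases (hr (a, b)).eq_or_lt with h | h
    · simp [← h]
    · rw [log_mul (h.trans_le (hrp a b)).ne' (h.trans_le (hrq a b)).ne', mul_add]
  have hgibbs : ∑ c, r c * log (p c.1 * q c.2) ≤ ∑ c, r c * log (r c) := by
    refine sum_mul_log_le_sum_mul_log hr (fun c => mul_nonneg ?_ ?_) (fun c hc => ?_) ?_
    · exact sum_nonneg fun b _ => hr _
    · exact sum_nonneg fun a _ => hr _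
    · rcases mul_eq_zero.1 hc with h | h
      · exact le_antisymm (h ▸ hrp c.1 c.2) (hr c)
      · exact le_antisymm (h ▸ hrq c.1 c.2) (hr c)
    · have hp1 : ∑ a, p a = 1 := by rw [← hr1, Fintype.sum_prod_type]
      have hq1 : ∑ b, q b = 1 := by rw [← hr1, Fintype.sum_prod_type_right]
      rw [Fintype.sum_prod_type, ← sum_mul_sum, hp1, hq1, hr1, one_mul]
  change ∑ c, negMulLog (r c) ≤ ∑ a, negMulLog (p a) + ∑ b, negMulLog (q b)
  simp only [hlog, sum_add_distrib] at hgibbs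
  rw [hp, hq]
  simp only [negMulLog, neg_mul, sum_neg_distrib]
  linarith

section Entropy

variable {Ω : Type*} [MeasurableSpace Ω] {μ : Measure Ω} {α β : Type*} [Fintype α] [Fintype β]

theorem shannonEntropy_comp_of_injective {f : α → β} (hf : f.Injective) (X : Ω → α) :
    shannonEntropy μ (f ∘ X) = shannonEntropy μ X := by
  refine (Fintype.sum_of_injective f hf _ _ (fun b hb => ?_) fun a => ?_).symm
  · rw [Set.preimage_comp, Set.preimage_singleton_eq_empty.2 hb, Set.preimage_empty,
      measure_empty, ENNReal.toReal_zero, negMulLog_zero]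
  · rw [Set.preimage_comp, ← Set.image_singleton, hf.preimage_image]

theorem shannonEntropy_eq_log_of_uniform (p : α → Prop) [DecidablePred p] {N : ℕ}
    (hN : #{x | p x} = N) {X : Ω → α}
    (hX : ∀ x, μ (X ⁻¹' {x}) = if p x then (N : ENNReal)⁻¹ else 0) :
    shannonEntropy μ X = log N := by
  have hterm : ∀ x, negMulLog (μ (X ⁻¹' {x})).toReal = if p x then (N : ℝ)⁻¹ * log N else 0 := by
    intro x
    rw [hX]
    split_ifs
    · rw [ENNReal.toReal_inv, ENNReal.toReal_natCast, negMulLog, log_inv]; ring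
    · simp
  unfold shannonEntropy
  rw [sum_congr rfl fun x _ => hterm x, sum_ite, sum_const_zero, add_zero, sum_const, hN,
    nsmul_eq_mul, ← mul_assoc]
  rcases N.eq_zero_or_pos with rfl | hN
  · simp
  · rw [mul_inv_cancel₀ (by positivity), one_mul]

theorem sum_measureReal_inter_preimage_singleton [MeasurableSpace β] [MeasurableSingletonClass β]
    [IsFiniteMeasure μ] {Y : Ω → β} (hY : Measurable Y) (s : Set Ω) :
    ∑ b, μ.real (s ∩ Y ⁻¹' {b}) = μ.real s := by
  have h := sum_measureReal_preimage_singleton (μ := μ.restrict s) univ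
    (fun b _ => hY (measurableSet_singleton b))
  simp only [coe_univ, Set.preimage_univ, measureReal_restrict_apply_univ,
    measureReal_restrict_apply (hY (measurableSet_singleton _))] at h
  simpa only [Set.inter_comm] using h

theorem sum_measureReal_preimage_singleton_eq_one [MeasurableSpace α] [MeasurableSingletonClass α]
    [IsProbabilityMeasure μ] {X : Ω → α} (hX : Measurable X) :
    ∑ a, μ.real (X ⁻¹' {a}) = 1 := by
  simpa using sum_measureReal_inter_preimage_singleton (μ := μ) hX Set.univ

variable [MeasurableSpace α] [MeasurableSingletonClass α] [MeasurableSpace β]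
  [MeasurableSingletonClass β] [IsProbabilityMeasure μ]

theorem shannonEntropy_pair_le {X : Ω → α} {Y : Ω → β} (hX : Measurable X) (hY : Measurable Y) :
    shannonEntropy μ (fun ω => (X ω, Y ω)) ≤ shannonEntropy μ X + shannonEntropy μ Y := by
  have hpair : ∀ c : α × β, (fun ω => (X ω, Y ω)) ⁻¹' {c} = X ⁻¹' {c.1} ∩ Y ⁻¹' {c.2} := by
    rintro ⟨a, b⟩
    rw [← Set.singleton_prod_singleton, Set.mk_preimage_prod]
  have hX' : ∀ a, μ.real (X ⁻¹' {a}) = ∑ b, μ.real (X ⁻¹' {a} ∩ Y ⁻¹' {b}) := fun a =>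
    (sum_measureReal_inter_preimage_singleton hY _).symm
  have hY' : ∀ b, μ.real (Y ⁻¹' {b}) = ∑ a, μ.real (X ⁻¹' {a} ∩ Y ⁻¹' {b}) := fun b => by
    simp only [Set.inter_comm (X ⁻¹' _)]
    exact (sum_measureReal_inter_preimage_singleton hX _).symm
  have h := sum_negMulLog_le_sum_negMulLog_marginals
    (r := fun c : α × β => μ.real (X ⁻¹' {c.1} ∩ Y ⁻¹' {c.2})) (fun _ => measureReal_nonneg)
    (by simpa only [hpair] using sum_measureReal_preimage_singleton_eq_one (hX.prodMk hY))
  simp only [← hX', ← hY', ← hpair] at h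
  exact h

theorem shannonEntropy_bool {W : Ω → Bool} (hW : Measurable W) :
    shannonEntropy μ W = binEntropy (μ.real (W ⁻¹' {true})) := by
  have h := sum_measureReal_preimage_singleton_eq_one (μ := μ) hW
  rw [Fintype.sum_bool] at h
  rw [binEntropy_eq_negMulLog_add_negMulLog_one_sub, ← h, add_sub_cancel_left]
  exact Fintype.sum_bool _

theorem shannonEntropy_pi_le {n : ℕ} {Z : Ω → Fin n → β} (hZ : Measurable Z) :
    shannonEntropy μ Z ≤ ∑ i, shannonEntropy μ (fun ω => Z ω i) := by
  induction n with
  | zero =>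
    have h : Z ⁻¹' {default} = Set.univ := Set.eq_univ_of_forall fun _ => Subsingleton.elim _ _
    simp [shannonEntropy, h]
  | succ n ih =>
    have hsplit : shannonEntropy μ Z = shannonEntropy μ (fun ω => (Z ω 0, Fin.tail (Z ω))) :=
      (shannonEntropy_comp_of_injective (Fin.consEquiv fun _ => β).symm.injective Z).symm
    have htail : Measurable fun ω => Fin.tail (Z ω) := measurable_pi_lambda _ fun i => hZ.eval
    rw [hsplit, Fin.sum_univ_succ]
    exact (shannonEntropy_pair_le hZ.eval htail).trans (add_le_add le_rfl (ih htail))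

end Entropy

theorem shannonEntropy_pair_le_add_sum_binEntropy {Ω : Type*} [MeasurableSpace Ω]
    {μ : Measure Ω} [IsProbabilityMeasure μ] {n : ℕ} {X Y : Ω → Fin n → Bool}
    (hX : Measurable X) (hY : Measurable Y) :
    shannonEntropy μ (fun ω => (X ω, Y ω)) ≤
      shannonEntropy μ Y + ∑ i, binEntropy (μ.real {ω | X ω i ≠ Y ω i}) := by
  set diff : (Fin n → Bool) × (Fin n → Bool) → Fin n → Bool := fun c i => c.1 i ^^ c.2 i
  set Z : Ω → Fin n → Bool := fun ω => diff (X ω, Y ω)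
  have hinj : Function.Injective fun c => (c.2, diff c) := by
    rintro ⟨x, y⟩ ⟨x', y'⟩ h
    simp only [Prod.mk.injEq] at h
    obtain ⟨rfl, h⟩ := h
    simpa [diff, funext_iff] using h
  have hZ : Measurable Z := (measurable_of_countable diff).comp (hX.prodMk hY)
  have hZi : ∀ i, shannonEntropy μ (fun ω => Z ω i) = binEntropy (μ.real {ω | X ω i ≠ Y ω i}) :=
    fun i => by
      rw [shannonEntropy_bool hZ.eval]
      congr 2
      ext ω
      simp [Z, diff]
  calc shannonEntropy μ (fun ω => (X ω, Y ω))
      = shannonEntropy μ (fun ω => (Y ω, Z ω)) :=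
        (shannonEntropy_comp_of_injective hinj _).symm
    _ ≤ shannonEntropy μ Y + ∑ i, shannonEntropy μ (fun ω => Z ω i) :=
        (shannonEntropy_pair_le hY hZ).trans (add_le_add le_rfl (shannonEntropy_pi_le hZ))
    _ = _ := by simp only [hZi]

theorem sum_binEntropy_le_card_mul_binEntropy {ι : Type*} [Fintype ι] {p : ι → ℝ} {δ : ℝ}
    (hp : ∀ i, p i ∈ Set.Icc 0 1) (hδ : δ ≤ 1 / 2) (hmean : (∑ i, p i) / Fintype.card ι ≤ δ) :
    ∑ i, binEntropy (p i) ≤ Fintype.card ι * binEntropy δ := by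
  rcases isEmpty_or_nonempty ι with hι | hι
  · simp
  have hK : (0 : ℝ) < Fintype.card ι := by exact_mod_cast Fintype.card_pos
  have hmean_eq : ∑ i, (Fintype.card ι : ℝ)⁻¹ • p i = (∑ i, p i) / Fintype.card ι := by
    simp only [smul_eq_mul, inv_mul_eq_div, sum_div]
  have hmean_nonneg : 0 ≤ (∑ i, p i) / Fintype.card ι :=
    div_nonneg (sum_nonneg fun i _ => (hp i).1) hK.le
  have hjensen := strictConcave_binEntropy.concaveOn.le_map_sum (t := univ)
    (w := fun _ => (Fintype.card ι : ℝ)⁻¹) (fun _ _ => inv_nonneg.2 hK.le)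
    (by simp [card_univ, hK.ne']) fun i _ => hp i
  have hmono : binEntropy ((∑ i, p i) / Fintype.card ι) ≤ binEntropy δ :=
    binEntropy_strictMonoOn.monotoneOn ⟨hmean_nonneg, by linarith⟩
      ⟨hmean_nonneg.trans hmean, by linarith⟩ hmean
  rw [hmean_eq, ← smul_sum, smul_eq_mul] at hjensen
  exact (inv_mul_le_iff₀ hK).1 (hjensen.trans hmono)

theorem stmt15_fano_uniform_subset_general {Ω : Type*} [MeasurableSpace Ω]
    (μ : Measure Ω) [IsProbabilityMeasure μ]
    (K : ℕ) (hKeven : Even K)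
    (X Y : Ω → (Fin K → Bool))
    (hXmeas : Measurable X) (hYmeas : Measurable Y)
    (hXunif : ∀ x : Fin K → Bool,
      μ (X ⁻¹' {x}) =
        if (univ.filter fun i => x i = true).card = K / 2
          then ((Nat.choose K (K / 2) : ENNReal))⁻¹ else 0)
    (δ : ℝ) (hδ : δ ∈ Set.Icc (0 : ℝ) (1 / 2))
    (herr : (1 / (K : ℝ)) * ∑ i : Fin K, (μ {ω | X ω i ≠ Y ω i}).toReal ≤ δ) :
    (K : ℝ) * (Real.log 2 - Real.binEntropy δ) - (1 / 2) * Real.log (2 * K) ≤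
      mutualInfo μ X Y := by
  have hX : shannonEntropy μ X = log (K.choose (K / 2)) := by
    refine shannonEntropy_eq_log_of_uniform _ ?_ hXunif
    simpa using card_filter_card_eq_true (ι := Fin K) (K / 2)
  have hfano := shannonEntropy_pair_le_add_sum_binEntropy (μ := μ) hXmeas hYmeas
  have hjensen := sum_binEntropy_le_card_mul_binEntropy
    (p := fun i => μ.real {ω | X ω i ≠ Y ω i}) (fun i => ⟨measureReal_nonneg, measureReal_le_one⟩)
    hδ.2 (by rwa [Fintype.card_fin, div_eq_inv_mul, ← one_div])
  have hlog := mul_log_two_sub_half_log_le_log_choose_half hKeven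
  rw [Fintype.card_fin] at hjensen
  unfold mutualInfo
  linarith

/-- Let `K ≥ 2` be even, let `X` be uniform on
`{x ∈ {0,1}^K : Σ_i x_i = K/2}`, and let `Y` be any `{0,1}^K`-valued random variable on the
same probability space.  If `δ ∈ [0, 1/2]` satisfies `(1/K)·Σ_i P(X_i ≠ Y_i) ≤ δ`, then
`I[X ; Y] ≥ K·(log 2 − h(δ)) − (1/2)·log(2K)` (in nats), where `h` is the binary entropy. -/
theorem stmt15_fano_uniform_subset {Ω : Type*} [MeasurableSpace Ω]
    (μ : Measure Ω) [IsProbabilityMeasure μ]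
    (K : ℕ) (hK : 2 ≤ K) (hKeven : Even K)
    (X Y : Ω → (Fin K → Bool))
    (hXmeas : Measurable X) (hYmeas : Measurable Y)
    (hXunif : ∀ x : Fin K → Bool,
      μ (X ⁻¹' {x}) =
        if (univ.filter fun i => x i = true).card = K / 2
          then ((Nat.choose K (K / 2) : ENNReal))⁻¹ else 0)
    (δ : ℝ) (hδ : δ ∈ Set.Icc (0 : ℝ) (1 / 2))
    (herr : (1 / (K : ℝ)) * ∑ i : Fin K, (μ {ω | X ω i ≠ Y ω i}).toReal ≤ δ) :
    (K : ℝ) * (Real.log 2 - Real.binEntropy δ) - (1 / 2) * Real.log (2 * K) ≤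
      mutualInfo μ X Y :=
  stmt15_fano_uniform_subset_general μ K hKeven X Y hXmeas hYmeas hXunif δ hδ herr
end

section
/- Let S, U, M be finite-valued random variables on a probability space such that U is independent of S, and let Y = g(U, M) for a function g. Then the mutual information satisfies I[S ; Y] ≤ H[M]. -/
open MeasureTheory Real ProbabilityTheory

namespace Stmt17Aux

open Finset

noncomputable def ent {α : Type*} [Fintype α] (p : α → ℝ) : ℝ :=
  ∑ a, Real.negMulLog (p a)

open Classical in
noncomputable def pmfMap {α β : Type*} [Fintype α] (f : α → β) (p : α → ℝ) : β → ℝ :=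
  fun b => ∑ a, if f a = b then p a else 0

open Classical

lemma pmfMap_nonneg {α β : Type*} [Fintype α] (f : α → β) (p : α → ℝ)
    (hp : ∀ a, 0 ≤ p a) (b : β) : 0 ≤ pmfMap f p b := by
  apply Finset.sum_nonneg; intro a _; split <;> simp [hp a]

lemma sum_pmfMap {α β : Type*} [Fintype α] [Fintype β] (f : α → β) (p : α → ℝ) :
    ∑ b, pmfMap f p b = ∑ a, p a := by
  unfold pmfMap
  rw [Finset.sum_comm]
  exact Finset.sum_congr rfl (fun a _ => by simp)

lemma pmfMap_comp {α β γ : Type*} [Fintype α] [Fintype β] (f : α → β) (g : β → γ)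
    (p : α → ℝ) : pmfMap g (pmfMap f p) = pmfMap (g ∘ f) p := by
  funext c
  unfold pmfMap
  have h1 : ∀ b : β, (if g b = c then ∑ a, if f a = b then p a else 0 else 0)
      = ∑ a, if g b = c ∧ f a = b then p a else 0 := by
    intro b; split <;> simp_all
  simp only [h1]
  rw [Finset.sum_comm]
  refine Finset.sum_congr rfl (fun a _ => ?_)
  rw [Finset.sum_eq_single (f a)]
  · simp [Function.comp]
  · intro b _ hb
    rw [if_neg]; rintro ⟨-, h2⟩; exact hb h2.symm
  · simp

lemma negMulLog_add_le {x y : ℝ} (hx : 0 ≤ x) (hy : 0 ≤ y) :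
    Real.negMulLog (x + y) ≤ Real.negMulLog x + Real.negMulLog y := by
  unfold Real.negMulLog
  have key : ∀ a b : ℝ, 0 ≤ a → 0 ≤ b → -(a * Real.log (a + b)) ≤ -(a * Real.log a) := by
    intro a b ha hb
    rcases eq_or_lt_of_le ha with h | h
    · simp [← h]
    · have : Real.log a ≤ Real.log (a + b) := Real.log_le_log h (by linarith)
      nlinarith
  have h1 := key x y hx hy
  have h2 := key y x hy hx
  rw [add_comm y x] at h2
  nlinarith

lemma negMulLog_sum_le {ι : Type*} (s : Finset ι) (p : ι → ℝ) (hp : ∀ i ∈ s, 0 ≤ p i) :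
    Real.negMulLog (∑ i ∈ s, p i) ≤ ∑ i ∈ s, Real.negMulLog (p i) := by
  induction s using Finset.induction_on with
  | empty => simp
  | @insert a s' ha ih =>
    rw [Finset.sum_insert ha, Finset.sum_insert ha]
    calc Real.negMulLog (p a + ∑ i ∈ s', p i)
        ≤ Real.negMulLog (p a) + Real.negMulLog (∑ i ∈ s', p i) :=
          negMulLog_add_le (hp a (by simp)) (Finset.sum_nonneg fun i hi => hp i (by simp [hi]))
      _ ≤ _ := by
          have := ih (fun i hi => hp i (by simp [hi]))
          linarith

lemma ent_pmfMap_le {α β : Type*} [Fintype α] [Fintype β] (f : α → β) (p : α → ℝ)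
    (hp : ∀ a, 0 ≤ p a) : ent (pmfMap f p) ≤ ent p := by
  unfold ent pmfMap
  calc ∑ b, Real.negMulLog (∑ a, if f a = b then p a else 0)
      ≤ ∑ b, ∑ a, Real.negMulLog (if f a = b then p a else 0) := by
        apply Finset.sum_le_sum; intro b _
        exact negMulLog_sum_le _ _ (fun a _ => by split <;> simp [hp a])
    _ = ∑ a, ∑ b, Real.negMulLog (if f a = b then p a else 0) := Finset.sum_comm
    _ = ∑ a, Real.negMulLog (p a) := by
        refine Finset.sum_congr rfl (fun a _ => ?_)
        rw [Finset.sum_eq_single (f a)]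
        · simp
        · intro b _ hb; rw [if_neg (fun h => hb h.symm), Real.negMulLog_zero]
        · simp

lemma pmfMap_apply_of_injective {α β : Type*} [Fintype α] (f : α → β)
    (hf : Function.Injective f) (p : α → ℝ) (a : α) : pmfMap f p (f a) = p a := by
  unfold pmfMap
  rw [Finset.sum_eq_single a]
  · simp
  · intro b _ hb; rw [if_neg (fun h => hb (hf h))]
  · simp

lemma ent_pmfMap_of_injective {α β : Type*} [Fintype α] [Fintype β] (f : α → β)
    (hf : Function.Injective f) (p : α → ℝ) : ent (pmfMap f p) = ent p := by
  unfold ent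
  rw [← Finset.sum_subset (Finset.subset_univ (Finset.univ.image f))]
  · rw [Finset.sum_image (fun a _ b _ h => hf h)]
    exact Finset.sum_congr rfl fun a _ => by rw [pmfMap_apply_of_injective f hf p a]
  · intro b _ hb
    have h0 : pmfMap f p b = 0 := by
      unfold pmfMap
      apply Finset.sum_eq_zero
      intro a _
      rw [if_neg]
      intro h; exact hb (by simp [← h])
    simp [h0, Real.negMulLog_zero]

section Submod

variable {α β γ : Type*} [Fintype α] [Fintype β] [Fintype γ]

lemma gibbs_term {u v w z : ℝ} (hu : 0 ≤ u) (hv : 0 ≤ v) (hw : 0 ≤ w) (hz : 0 ≤ z)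
    (huv : u ≤ v) (huw : u ≤ w) (huz : u ≤ z) :
    u * Real.log v + u * Real.log w - u * Real.log z - u * Real.log u
      ≤ v * w / z - u := by
  rcases eq_or_lt_of_le hu with h | h
  · rw [← h]; simp [div_nonneg (mul_nonneg hv hw) hz]
  · have hv' : 0 < v := lt_of_lt_of_le h huv
    have hw' : 0 < w := lt_of_lt_of_le h huw
    have hz' : 0 < z := lt_of_lt_of_le h huz
    have ht : 0 < v * w / (z * u) := by positivity
    have hlog := Real.log_le_sub_one_of_pos ht
    have hlogt : Real.log (v * w / (z * u)) =
        Real.log v + Real.log w - Real.log z - Real.log u := by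
      rw [Real.log_div (by positivity) (by positivity), Real.log_mul hv'.ne' hw'.ne',
        Real.log_mul hz'.ne' h.ne']
      ring
    have h2 : u * Real.log (v * w / (z * u)) ≤ u * (v * w / (z * u) - 1) :=
      mul_le_mul_of_nonneg_left hlog hu
    have h3 : u * (v * w / (z * u) - 1) = v * w / z - u := by
      field_simp
    rw [hlogt, h3] at h2
    linarith

lemma pmfMap_pair12 (q : α × β × γ → ℝ) :
    pmfMap (fun x => (x.1, x.2.1)) q = fun y => ∑ c, q (y.1, y.2, c) := by
  funext y
  simp only [pmfMap]
  rw [Fintype.sum_prod_type]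
  simp only [Fintype.sum_prod_type, Prod.ext_iff, ite_and]
  rw [Finset.sum_eq_single y.1]
  · rw [Finset.sum_eq_single y.2]
    · simp
    · intro b _ hb
      rw [Finset.sum_eq_zero]; intro c _; rw [if_pos rfl, if_neg hb]
    · simp
  · intro a _ ha
    rw [Finset.sum_eq_zero]; intro b _; rw [Finset.sum_eq_zero]; intro c _
    rw [if_neg ha]
  · simp

lemma pmfMap_pair23 (q : α × β × γ → ℝ) :
    pmfMap (fun x => x.2) q = fun y => ∑ a, q (a, y.1, y.2) := by
  funext y
  simp only [pmfMap]
  rw [Fintype.sum_prod_type]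
  refine Finset.sum_congr rfl (fun a _ => ?_)
  rw [Finset.sum_eq_single y]
  · simp
  · intro z _ hz; rw [if_neg hz]
  · simp

lemma pmfMap_mid (q : α × β × γ → ℝ) :
    pmfMap (fun x => x.2.1) q = fun b => ∑ a, ∑ c, q (a, b, c) := by
  funext b
  simp only [pmfMap]
  rw [Fintype.sum_prod_type]
  refine Finset.sum_congr rfl (fun a _ => ?_)
  rw [Fintype.sum_prod_type]
  rw [Finset.sum_eq_single b]
  · simp
  · intro b' _ hb; rw [Finset.sum_eq_zero]; intro c _; rw [if_neg hb]
  · simp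

lemma submod (q : α × β × γ → ℝ) (hq : ∀ x, 0 ≤ q x) :
    ent q + ent (pmfMap (fun x => x.2.1) q) ≤
      ent (pmfMap (fun x => (x.1, x.2.1)) q) + ent (pmfMap (fun x => x.2) q) := by
  rw [pmfMap_pair12, pmfMap_pair23, pmfMap_mid]
  set Q12 : α × β → ℝ := fun y => ∑ c, q (y.1, y.2, c) with hQ12
  set Q23 : β × γ → ℝ := fun y => ∑ a, q (a, y.1, y.2) with hQ23
  set Q2 : β → ℝ := fun b => ∑ a, ∑ c, q (a, b, c) with hQ2def
  have hQ12n : ∀ y, 0 ≤ Q12 y := fun y => Finset.sum_nonneg fun _ _ => hq _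
  have hQ23n : ∀ y, 0 ≤ Q23 y := fun y => Finset.sum_nonneg fun _ _ => hq _
  have hQ2n : ∀ b, 0 ≤ Q2 b := fun b =>
    Finset.sum_nonneg fun _ _ => Finset.sum_nonneg fun _ _ => hq _
  have hd12 : ∀ x : α × β × γ, q x ≤ Q12 (x.1, x.2.1) := by
    intro ⟨a, b, c⟩
    exact Finset.single_le_sum (f := fun c => q (a, b, c)) (fun _ _ => hq _) (mem_univ c)
  have hd23 : ∀ x : α × β × γ, q x ≤ Q23 x.2 := by
    intro ⟨a, b, c⟩
    exact Finset.single_le_sum (f := fun a => q (a, b, c)) (fun _ _ => hq _) (mem_univ a)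
  have hd2 : ∀ x : α × β × γ, q x ≤ Q2 x.2.1 := by
    intro ⟨a, b, c⟩
    calc q (a, b, c) ≤ ∑ c', q (a, b, c') := hd12 (a, b, c)
      _ ≤ ∑ a', ∑ c', q (a', b, c') :=
        Finset.single_le_sum (f := fun a' => ∑ c', q (a', b, c'))
          (fun _ _ => Finset.sum_nonneg fun _ _ => hq _) (mem_univ a)
  have hsum : ∑ x : α × β × γ,
      (q x * Real.log (Q12 (x.1, x.2.1)) + q x * Real.log (Q23 x.2)
        - q x * Real.log (Q2 x.2.1) - q x * Real.log (q x))
      ≤ ∑ x : α × β × γ, (Q12 (x.1, x.2.1) * Q23 x.2 / Q2 x.2.1 - q x) := by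
    apply Finset.sum_le_sum
    intro x _
    exact gibbs_term (hq x) (hQ12n _) (hQ23n _) (hQ2n _) (hd12 x) (hd23 x) (hd2 x)
  have hzero : ∑ x : α × β × γ, (Q12 (x.1, x.2.1) * Q23 x.2 / Q2 x.2.1 - q x) = 0 := by
    rw [Finset.sum_sub_distrib]
    have h1 : ∑ x : α × β × γ, Q12 (x.1, x.2.1) * Q23 x.2 / Q2 x.2.1 = ∑ b, Q2 b := by
      rw [Fintype.sum_prod_type]
      simp only [Fintype.sum_prod_type]
      rw [Finset.sum_comm]
      refine Finset.sum_congr rfl (fun b _ => ?_)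
      rcases eq_or_lt_of_le (hQ2n b) with h0 | h0
      · have hqz : ∀ a c, q (a, b, c) = 0 := by
          intro a c
          have := hd2 (a, b, c)
          have := hq (a, b, c)
          simp only [← h0] at *
          linarith
        have hQ12z : ∀ a, Q12 (a, b) = 0 := fun a => by
          simp [hQ12, hqz]
        rw [Finset.sum_eq_zero, ← h0]
        intro a _
        rw [Finset.sum_eq_zero]
        intro c _
        rw [hQ12z a, zero_mul, zero_div]
      · have e2 : ∑ c, Q23 (b, c) = Q2 b := by
          rw [hQ23, hQ2def]
          exact Finset.sum_comm
        calc ∑ a, ∑ c, Q12 (a, b) * Q23 (b, c) / Q2 b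
            = ∑ a, Q12 (a, b) * Q2 b / Q2 b := by
              refine Finset.sum_congr rfl (fun a _ => ?_)
              rw [← e2, Finset.mul_sum, Finset.sum_div]
          _ = (∑ a, Q12 (a, b)) * Q2 b / Q2 b := by
              rw [Finset.sum_mul, Finset.sum_div]
          _ = Q2 b * Q2 b / Q2 b := by rw [show (∑ a, Q12 (a, b)) = Q2 b from rfl]
          _ = Q2 b := by field_simp
    rw [h1]
    simp only [hQ2def]
    rw [Fintype.sum_prod_type]
    rw [Finset.sum_comm]
    simp [Fintype.sum_prod_type]
  have entq : ent q = -∑ x : α × β × γ, q x * Real.log (q x) := by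
    simp [ent, Real.negMulLog, neg_mul, Finset.sum_neg_distrib]
  have entQ12 : ent Q12 = -∑ y : α × β, Q12 y * Real.log (Q12 y) := by
    simp [ent, Real.negMulLog, neg_mul, Finset.sum_neg_distrib]
  have entQ23 : ent Q23 = -∑ y : β × γ, Q23 y * Real.log (Q23 y) := by
    simp [ent, Real.negMulLog, neg_mul, Finset.sum_neg_distrib]
  have entQ2 : ent Q2 = -∑ b, Q2 b * Real.log (Q2 b) := by
    simp [ent, Real.negMulLog, neg_mul, Finset.sum_neg_distrib]
  have E12 : ∑ x : α × β × γ, q x * Real.log (Q12 (x.1, x.2.1))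
      = ∑ y : α × β, Q12 y * Real.log (Q12 y) := by
    rw [Fintype.sum_prod_type (f := fun y : α × β => Q12 y * Real.log (Q12 y))]
    rw [Fintype.sum_prod_type]
    refine Finset.sum_congr rfl (fun a _ => ?_)
    rw [Fintype.sum_prod_type]
    refine Finset.sum_congr rfl (fun b _ => ?_)
    rw [show Q12 (a, b) * Real.log (Q12 (a, b))
        = (∑ c, q (a, b, c)) * Real.log (Q12 (a, b)) from rfl, Finset.sum_mul]
  have E23 : ∑ x : α × β × γ, q x * Real.log (Q23 x.2)
      = ∑ y : β × γ, Q23 y * Real.log (Q23 y) := by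
    rw [Fintype.sum_prod_type]
    rw [Finset.sum_comm]
    refine Finset.sum_congr rfl (fun z _ => ?_)
    rw [show Q23 z * Real.log (Q23 z)
        = (∑ a, q (a, z.1, z.2)) * Real.log (Q23 z) from rfl, Finset.sum_mul]
  have E2 : ∑ x : α × β × γ, q x * Real.log (Q2 x.2.1)
      = ∑ b, Q2 b * Real.log (Q2 b) := by
    rw [Fintype.sum_prod_type]
    simp only [Fintype.sum_prod_type]
    rw [Finset.sum_comm]
    refine Finset.sum_congr rfl (fun b _ => ?_)
    rw [show Q2 b * Real.log (Q2 b) = (∑ a, ∑ c, q (a, b, c)) * Real.log (Q2 b) from rfl,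
      Finset.sum_mul]
    refine Finset.sum_congr rfl (fun a _ => ?_)
    rw [Finset.sum_mul]
  have expand : ∑ x : α × β × γ,
      (q x * Real.log (Q12 (x.1, x.2.1)) + q x * Real.log (Q23 x.2)
        - q x * Real.log (Q2 x.2.1) - q x * Real.log (q x))
      = (∑ x : α × β × γ, q x * Real.log (Q12 (x.1, x.2.1)))
        + (∑ x : α × β × γ, q x * Real.log (Q23 x.2))
        - (∑ x : α × β × γ, q x * Real.log (Q2 x.2.1))
        - ∑ x : α × β × γ, q x * Real.log (q x) := by
    simp only [Finset.sum_sub_distrib, Finset.sum_add_distrib]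
  rw [hzero] at hsum
  rw [expand, E12, E23, E2] at hsum
  linarith

end Submod

lemma ent_mul {σ υ : Type*} [Fintype σ] [Fintype υ] (ps : σ → ℝ) (pu : υ → ℝ)
    (hs1 : ∑ s, ps s = 1) (hu1 : ∑ u, pu u = 1) :
    ent (fun y : σ × υ => ps y.1 * pu y.2) = ent ps + ent pu := by
  unfold ent
  calc ∑ y : σ × υ, Real.negMulLog (ps y.1 * pu y.2)
      = ∑ s, ∑ u, (pu u * Real.negMulLog (ps s) + ps s * Real.negMulLog (pu u)) := by
        rw [Fintype.sum_prod_type]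
        exact Finset.sum_congr rfl fun s _ => Finset.sum_congr rfl fun u _ =>
          Real.negMulLog_mul _ _
    _ = ∑ s, ((∑ u, pu u) * Real.negMulLog (ps s) + ps s * ∑ u, Real.negMulLog (pu u)) := by
        refine Finset.sum_congr rfl fun s _ => ?_
        rw [Finset.sum_add_distrib, ← Finset.sum_mul, ← Finset.mul_sum]
    _ = ∑ s, (Real.negMulLog (ps s) + ps s * ∑ u, Real.negMulLog (pu u)) := by
        simp [hs1, hu1]
    _ = (∑ s, Real.negMulLog (ps s)) + (∑ s, ps s) * ∑ u, Real.negMulLog (pu u) := by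
        rw [Finset.sum_add_distrib, ← Finset.sum_mul]
    _ = _ := by rw [hs1, one_mul]

variable {Ω : Type*} [MeasurableSpace Ω] (μ : Measure Ω) [IsProbabilityMeasure μ]
variable {τ : Type*} [Fintype τ] (T : Ω → τ)

lemma measure_comp_toReal (hT : ∀ t : τ, MeasurableSet (T ⁻¹' {t}))
    {β : Type*} [Fintype β] (f : τ → β) (b : β) :
    (μ ((fun ω => f (T ω)) ⁻¹' {b})).toReal
      = pmfMap f (fun t => (μ (T ⁻¹' {t})).toReal) b := by
  have h1 : (fun ω => f (T ω)) ⁻¹' {b} = T ⁻¹' (f ⁻¹' {b}) := rfl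
  have h2 : f ⁻¹' {b} = ↑(Finset.univ.filter (fun t => f t = b)) := by
    ext t; simp
  rw [h1, h2, ← MeasureTheory.sum_measure_preimage_singleton _ (fun t _ => hT t),
    ENNReal.toReal_sum (fun t _ => measure_ne_top μ _)]
  unfold pmfMap
  rw [Finset.sum_filter]

lemma shannon_comp (hT : ∀ t : τ, MeasurableSet (T ⁻¹' {t}))
    {β : Type*} [Fintype β] (f : τ → β) :
    (∑ b : β, Real.negMulLog ((μ ((fun ω => f (T ω)) ⁻¹' {b})).toReal))
      = ent (pmfMap f (fun t => (μ (T ⁻¹' {t})).toReal)) := by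
  unfold ent
  exact Finset.sum_congr rfl fun b _ => by rw [measure_comp_toReal μ T hT f b]

lemma sum_p_eq_one (hT : ∀ t : τ, MeasurableSet (T ⁻¹' {t})) :
    ∑ t : τ, (μ (T ⁻¹' {t})).toReal = 1 := by
  rw [← ENNReal.toReal_sum (fun t _ => measure_ne_top μ _),
    MeasureTheory.sum_measure_preimage_singleton _ (fun t _ => hT t)]
  simp

lemma shannonEntropy_eq (hT : ∀ t : τ, MeasurableSet (T ⁻¹' {t}))
    {β : Type*} [Fintype β] (f : τ → β) (X : Ω → β) (hX : ∀ ω, X ω = f (T ω)) :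
    shannonEntropy μ X = ent (pmfMap f (fun t => (μ (T ⁻¹' {t})).toReal)) := by
  rw [show X = fun ω => f (T ω) from funext hX]
  unfold shannonEntropy
  exact shannon_comp μ T hT f

end Stmt17Aux

open Stmt17Aux

/-- Let `S, U, M` be finite-valued random variables with `U` independent
of `S`, and let `Y = g(U, M)`.  Then `I[S ; Y] ≤ H[M]` (in nats). -/
theorem stmt17_info_through_memory {Ω : Type*} [MeasurableSpace Ω]
    (μ : Measure Ω) [IsProbabilityMeasure μ]
    {σ υ ν γ : Type*} [Fintype σ] [Fintype υ] [Fintype ν] [Fintype γ]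
    [MeasurableSpace σ] [MeasurableSingletonClass σ]
    [MeasurableSpace υ] [MeasurableSingletonClass υ]
    [MeasurableSpace ν] [MeasurableSingletonClass ν]
    [MeasurableSpace γ] [MeasurableSingletonClass γ]
    (S : Ω → σ) (U : Ω → υ) (M : Ω → ν) (g : υ × ν → γ)
    (hS : Measurable S) (hU : Measurable U) (hM : Measurable M)
    (hindep : IndepFun U S μ)
    (Y : Ω → γ) (hY : ∀ ω, Y ω = g (U ω, M ω)) :
    mutualInfo μ S Y ≤ shannonEntropy μ M := by
  classical
  have hT : ∀ t : σ × υ × ν, MeasurableSet ((fun ω => (S ω, U ω, M ω)) ⁻¹' {t}) := by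
    intro t
    have h : (fun ω => (S ω, U ω, M ω)) ⁻¹' {t}
        = S ⁻¹' {t.1} ∩ (U ⁻¹' {t.2.1} ∩ M ⁻¹' {t.2.2}) := by
      ext ω
      simp [Prod.ext_iff]
    rw [h]
    exact (hS (measurableSet_singleton _)).inter
      ((hU (measurableSet_singleton _)).inter (hM (measurableSet_singleton _)))
  obtain ⟨p, hp_def⟩ : ∃ p : σ × υ × ν → ℝ,
      p = fun t => (μ ((fun ω => (S ω, U ω, M ω)) ⁻¹' {t})).toReal := ⟨_, rfl⟩
  have hpn : ∀ t, 0 ≤ p t := fun t => by rw [hp_def]; exact ENNReal.toReal_nonneg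
  have hp1 : ∑ t, p t = 1 := by rw [hp_def]; exact sum_p_eq_one μ _ hT
  -- identifications of the entropies appearing in the statement
  have eS : shannonEntropy μ S = ent (pmfMap (fun t : σ × υ × ν => t.1) p) := by
    rw [hp_def]
    exact shannonEntropy_eq μ _ hT _ S (fun ω => rfl)
  have eM : shannonEntropy μ M = ent (pmfMap (fun t : σ × υ × ν => t.2.2) p) := by
    rw [hp_def]
    exact shannonEntropy_eq μ _ hT _ M (fun ω => rfl)
  have eY : shannonEntropy μ Y = ent (pmfMap (fun t : σ × υ × ν => g t.2) p) := by
    rw [hp_def]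
    exact shannonEntropy_eq μ _ hT _ Y (fun ω => hY ω)
  have eSY : shannonEntropy μ (fun ω => (S ω, Y ω))
      = ent (pmfMap (fun t : σ × υ × ν => (t.1, g t.2)) p) := by
    rw [hp_def]
    exact shannonEntropy_eq μ _ hT _ _ (fun ω => by rw [hY ω])
  -- independence at the pmf level
  have hps1 : ∑ s, pmfMap (fun t : σ × υ × ν => t.1) p s = 1 := by
    rw [sum_pmfMap]; exact hp1
  have hpu1 : ∑ u, pmfMap (fun t : σ × υ × ν => t.2.1) p u = 1 := by
    rw [sum_pmfMap]; exact hp1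
  have hprod : pmfMap (fun t : σ × υ × ν => (t.1, t.2.1)) p
      = fun y => pmfMap (fun t : σ × υ × ν => t.1) p y.1
          * pmfMap (fun t : σ × υ × ν => t.2.1) p y.2 := by
    funext y
    rw [hp_def]
    rw [← measure_comp_toReal μ _ hT (fun t : σ × υ × ν => (t.1, t.2.1)) y,
      ← measure_comp_toReal μ _ hT (fun t : σ × υ × ν => t.1) y.1,
      ← measure_comp_toReal μ _ hT (fun t : σ × υ × ν => t.2.1) y.2]
    have hpre : (fun ω => (fun t : σ × υ × ν => (t.1, t.2.1)) ((S ω, U ω, M ω))) ⁻¹' {y}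
        = U ⁻¹' {y.2} ∩ S ⁻¹' {y.1} := by
      ext ω; simp [Prod.ext_iff, and_comm]
    have hpre1 : (fun ω => (fun t : σ × υ × ν => t.1) ((S ω, U ω, M ω))) ⁻¹' {y.1}
        = S ⁻¹' {y.1} := rfl
    have hpre2 : (fun ω => (fun t : σ × υ × ν => t.2.1) ((S ω, U ω, M ω))) ⁻¹' {y.2}
        = U ⁻¹' {y.2} := rfl
    rw [hpre, hpre1, hpre2,
      hindep.measure_inter_preimage_eq_mul _ _ (measurableSet_singleton _)
        (measurableSet_singleton _), ENNReal.toReal_mul, mul_comm]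
  have eSU : ent (pmfMap (fun t : σ × υ × ν => (t.1, t.2.1)) p)
      = ent (pmfMap (fun t : σ × υ × ν => t.1) p)
        + ent (pmfMap (fun t : σ × υ × ν => t.2.1) p) := by
    rw [hprod]; exact ent_mul _ _ hps1 hpu1
  -- data processing via submodularity
  have hF : Function.Injective (fun t : σ × υ × ν => (t.1, g t.2, t.2)) := by
    intro a b h
    simp only [Prod.ext_iff] at h
    exact Prod.ext h.1 (Prod.ext h.2.2.1 h.2.2.2)
  have hdp := submod (pmfMap (fun t : σ × υ × ν => (t.1, g t.2, t.2)) p)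
    (pmfMap_nonneg _ _ hpn)
  rw [pmfMap_comp, pmfMap_comp, pmfMap_comp, ent_pmfMap_of_injective _ hF] at hdp
  have c1 : ((fun x : σ × γ × (υ × ν) => x.2.1) ∘ fun t : σ × υ × ν => (t.1, g t.2, t.2))
      = fun t : σ × υ × ν => g t.2 := rfl
  have c2 : ((fun x : σ × γ × (υ × ν) => (x.1, x.2.1)) ∘ fun t : σ × υ × ν => (t.1, g t.2, t.2))
      = fun t : σ × υ × ν => (t.1, g t.2) := rfl
  have c3 : ((fun x : σ × γ × (υ × ν) => x.2) ∘ fun t : σ × υ × ν => (t.1, g t.2, t.2))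
      = fun t : σ × υ × ν => (g t.2, t.2) := rfl
  rw [c1, c2, c3] at hdp
  have eBC : ent (pmfMap (fun t : σ × υ × ν => (g t.2, t.2)) p)
      = ent (pmfMap (fun t : σ × υ × ν => t.2) p) := by
    have h1 : (fun t : σ × υ × ν => (g t.2, t.2))
        = (fun w : υ × ν => (g w, w)) ∘ (fun t : σ × υ × ν => t.2) := rfl
    rw [h1, ← pmfMap_comp, ent_pmfMap_of_injective]
    intro a b h
    exact (Prod.ext_iff.mp h).2
  rw [eBC] at hdp
  -- subadditivity H[U,M] ≤ H[U] + H[M] via submodularity with a trivial middle coordinate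
  have hsub := submod (pmfMap (fun t : σ × υ × ν => (t.2.1, ((), t.2.2))) p)
    (pmfMap_nonneg _ _ hpn)
  rw [pmfMap_comp, pmfMap_comp, pmfMap_comp] at hsub
  have d0 : ent (pmfMap (fun t : σ × υ × ν => (t.2.1, ((), t.2.2))) p)
      = ent (pmfMap (fun t : σ × υ × ν => t.2) p) := by
    have h1 : (fun t : σ × υ × ν => (t.2.1, ((), t.2.2)))
        = (fun w : υ × ν => (w.1, ((), w.2))) ∘ (fun t : σ × υ × ν => t.2) := rfl
    rw [h1, ← pmfMap_comp, ent_pmfMap_of_injective]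
    intro a b h
    simp only [Prod.ext_iff] at h
    exact Prod.ext h.1 h.2.2
  have d1 : ((fun x : υ × Unit × ν => x.2.1) ∘ fun t : σ × υ × ν => (t.2.1, ((), t.2.2)))
      = fun _ : σ × υ × ν => () := rfl
  have d2 : ((fun x : υ × Unit × ν => (x.1, x.2.1)) ∘ fun t : σ × υ × ν => (t.2.1, ((), t.2.2)))
      = fun t : σ × υ × ν => (t.2.1, ()) := rfl
  have d3 : ((fun x : υ × Unit × ν => x.2) ∘ fun t : σ × υ × ν => (t.2.1, ((), t.2.2)))
      = fun t : σ × υ × ν => ((), t.2.2) := rfl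
  rw [d0, d1, d2, d3] at hsub
  have dMid : ent (pmfMap (fun _ : σ × υ × ν => ()) p) = 0 := by
    simp [ent, pmfMap, hp1]
  have dU : ent (pmfMap (fun t : σ × υ × ν => (t.2.1, ())) p)
      = ent (pmfMap (fun t : σ × υ × ν => t.2.1) p) := by
    have h1 : (fun t : σ × υ × ν => (t.2.1, ()))
        = (fun u : υ => (u, ())) ∘ (fun t : σ × υ × ν => t.2.1) := rfl
    rw [h1, ← pmfMap_comp, ent_pmfMap_of_injective]
    intro a b h
    exact (Prod.ext_iff.mp h).1
  have dM : ent (pmfMap (fun t : σ × υ × ν => ((), t.2.2)) p)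
      = ent (pmfMap (fun t : σ × υ × ν => t.2.2) p) := by
    have h1 : (fun t : σ × υ × ν => ((), t.2.2))
        = (fun m : ν => ((), m)) ∘ (fun t : σ × υ × ν => t.2.2) := rfl
    rw [h1, ← pmfMap_comp, ent_pmfMap_of_injective]
    intro a b h
    exact (Prod.ext_iff.mp h).2
  rw [dMid, dU, dM] at hsub
  -- monotonicity: H[S,U] ≤ H[S,U,M]
  have hmono : ent (pmfMap (fun t : σ × υ × ν => (t.1, t.2.1)) p) ≤ ent p :=
    ent_pmfMap_le _ _ hpn
  -- assemble
  unfold mutualInfo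
  rw [eS, eM, eY, eSY]
  linarith [hdp, hsub, hmono, eSU]
end

section
/- Let K ≥ 2 and T be positive integers with T ≥ 40K, set H := T/(10K) (a real number, so H ≥ 4), define t_0 := 1 and t_i := ⌈√(H·t_{i−1})⌉ for i ≥ 1, and L := ⌊log₂ log₂ H⌋. Define N_main := Σ_{i=1}^{L} ( t_i + (K−1)·Σ_{k=1}^{i} t_k ). Then T/40 ≤ N_main ≤ 3T/5; in particular, 2T/5 ≤ T − N_main ≤ 39T/40. -/
/-! The schedule satisfies `H^(1-2^(-i)) ≤ t_i ≤ 2·H^(1-2^(-i))`: the exponents are exactly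
reproduced by `√(H · H^(1-2^(-i))) = H^(1-2^(-i-1))`, and once `H ≥ 4` rounding up costs less than
the spare factor 2. Write `H = 2^g` with `2^L ≤ g < 2^(L+1)`. For `k ≤ L` the missing factor
`H^(2^(-k)) = 2^(g/2^k)` is at least `2^(L+1-k)`, so `t_k ≤ H·2^(k-L)`; both sums in `N_main` are then
geometric and `N_main ≤ 4KH = 2T/5`. At the other end `H^(2^(-L)) ≤ 4`, so the last block alone
gives `N_main ≥ K·t_L ≥ KH/4 = T/40`. -/

open Real Finset

noncomputable def sqrtSchedule (H : ℝ) : ℕ → ℕ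
  | 0 => 1
  | i + 1 => ⌈√(H * sqrtSchedule H i)⌉₊

def roundBudget (K L : ℕ) (t : ℕ → ℕ) : ℕ :=
  ∑ i ∈ Icc 1 L, (t i + (K - 1) * ∑ k ∈ Icc 1 i, t k)

lemma sqrt_mul_rpow_one_sub_half_pow {H : ℝ} (hH : 0 < H) (i : ℕ) :
    √(H * H ^ (1 - (1 / 2 : ℝ) ^ i)) = H ^ (1 - (1 / 2 : ℝ) ^ (i + 1)) := by
  have hpow : (1 / 2 : ℝ) ^ i ≤ 1 := pow_le_one₀ (by norm_num) (by norm_num)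
  rw [← rpow_one_add' hH.le (by linarith : 0 < 1 + (1 - (1 / 2 : ℝ) ^ i)).ne', sqrt_eq_rpow,
    ← rpow_mul hH.le]
  congr 1
  ring

lemma two_le_rpow_one_sub_half_pow_succ {H : ℝ} (hH : 4 ≤ H) (i : ℕ) :
    2 ≤ H ^ (1 - (1 / 2 : ℝ) ^ (i + 1)) := by
  have hsqrt : 2 ≤ √H := le_sqrt_of_sq_le (by linarith)
  have hexp : 1 / 2 ≤ 1 - (1 / 2 : ℝ) ^ (i + 1) := by
    have : (1 / 2 : ℝ) ^ (i + 1) ≤ 1 / 2 :=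
      pow_le_of_le_one (by norm_num) (by norm_num) (by omega)
    linarith
  calc 2 ≤ √H := hsqrt
    _ = H ^ (1 / 2 : ℝ) := sqrt_eq_rpow H
    _ ≤ H ^ (1 - (1 / 2 : ℝ) ^ (i + 1)) := rpow_le_rpow_of_exponent_le (by linarith) hexp

lemma rpow_one_sub_half_pow_le_sqrtSchedule {H : ℝ} (hH : 0 < H) (i : ℕ) :
    H ^ (1 - (1 / 2 : ℝ) ^ i) ≤ sqrtSchedule H i := by
  induction i with
  | zero => simp [sqrtSchedule]
  | succ i ih =>
    rw [← sqrt_mul_rpow_one_sub_half_pow hH, sqrtSchedule]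
    exact (sqrt_le_sqrt (mul_le_mul_of_nonneg_left ih hH.le)).trans (Nat.le_ceil _)

lemma sqrtSchedule_le_two_mul_rpow {H : ℝ} (hH : 4 ≤ H) (i : ℕ) :
    (sqrtSchedule H i : ℝ) ≤ 2 * H ^ (1 - (1 / 2 : ℝ) ^ i) := by
  have hH0 : 0 < H := by linarith
  induction i with
  | zero => norm_num [sqrtSchedule]
  | succ i ih =>
    set X := H ^ (1 - (1 / 2 : ℝ) ^ (i + 1))
    have hceil : (sqrtSchedule H (i + 1) : ℝ) < √(H * sqrtSchedule H i) + 1 :=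
      Nat.ceil_lt_add_one (sqrt_nonneg _)
    have hsqrt : √(H * sqrtSchedule H i) ≤ √2 * X := by
      calc √(H * sqrtSchedule H i) ≤ √(2 * (H * H ^ (1 - (1 / 2 : ℝ) ^ i))) :=
            sqrt_le_sqrt (by nlinarith)
        _ = √2 * X := by rw [sqrt_mul zero_le_two, sqrt_mul_rpow_one_sub_half_pow hH0]
    have hX : 2 ≤ X := two_le_rpow_one_sub_half_pow_succ hH i
    have hsqrt2 : √2 ≤ 3 / 2 := by
      rw [sqrt_le_left (by norm_num)]; norm_num
    nlinarith

lemma rpow_eq_two_rpow_logb_mul {H : ℝ} (hH : 0 < H) (s : ℝ) : H ^ s = 2 ^ (logb 2 H * s) := by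
  rw [rpow_mul zero_le_two, rpow_logb zero_lt_two (by norm_num) hH]

lemma two_pow_sub_le_rpow_half_pow {H : ℝ} {L k : ℕ} (hH : 0 < H) (hL : 2 ^ L ≤ logb 2 H)
    (hk : k ≤ L) : (2 : ℝ) ^ (L + 1 - k) ≤ H ^ ((1 / 2 : ℝ) ^ k) := by
  have hlin : ((L + 1 - k : ℕ) : ℝ) ≤ 2 ^ (L - k) := by
    have := Nat.lt_two_pow_self (n := L - k)
    exact_mod_cast (show L + 1 - k ≤ 2 ^ (L - k) by omega)
  have hexp : ((L + 1 - k : ℕ) : ℝ) ≤ logb 2 H * (1 / 2) ^ k := by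
    calc ((L + 1 - k : ℕ) : ℝ) ≤ 2 ^ (L - k) := hlin
      _ = 2 ^ L * (1 / 2) ^ k := by
        rw [one_div, inv_pow, eq_mul_inv_iff_mul_eq₀ (by positivity), ← pow_add,
          Nat.sub_add_cancel hk]
      _ ≤ logb 2 H * (1 / 2) ^ k := by gcongr
  rw [rpow_eq_two_rpow_logb_mul hH, ← rpow_natCast]
  exact rpow_le_rpow_of_exponent_le one_le_two hexp

lemma rpow_half_pow_le_four {H : ℝ} {L : ℕ} (hH : 0 < H) (hL : logb 2 H < 2 ^ (L + 1)) :
    H ^ ((1 / 2 : ℝ) ^ L) ≤ 4 := by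
  have hexp : logb 2 H * (1 / 2) ^ L ≤ 2 := by
    calc logb 2 H * (1 / 2) ^ L ≤ 2 ^ (L + 1) * (1 / 2) ^ L := by gcongr
      _ = 2 := by rw [pow_succ, mul_right_comm, ← mul_pow]; norm_num
  rw [rpow_eq_two_rpow_logb_mul hH]
  calc (2 : ℝ) ^ (logb 2 H * (1 / 2) ^ L) ≤ 2 ^ (2 : ℝ) :=
        rpow_le_rpow_of_exponent_le one_le_two hexp
    _ = 4 := by norm_num

lemma sqrtSchedule_le_div_two_pow_mul {H : ℝ} {L k : ℕ} (hH : 4 ≤ H) (hL : 2 ^ L ≤ logb 2 H)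
    (hk : k ≤ L) : (sqrtSchedule H k : ℝ) ≤ H / 2 ^ L * 2 ^ k := by
  have hH0 : 0 < H := by linarith
  have hpow : (2 : ℝ) ^ (L + 1 - k) * 2 ^ k = 2 * 2 ^ L := by
    rw [← pow_add, Nat.sub_add_cancel (by omega), pow_succ']
  calc (sqrtSchedule H k : ℝ) ≤ 2 * H ^ (1 - (1 / 2 : ℝ) ^ k) :=
        sqrtSchedule_le_two_mul_rpow hH k
    _ = 2 * H / H ^ ((1 / 2 : ℝ) ^ k) := by rw [rpow_sub hH0, rpow_one, mul_div_assoc]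
    _ ≤ 2 * H / 2 ^ (L + 1 - k) := by
        gcongr
        exact two_pow_sub_le_rpow_half_pow hH0 hL hk
    _ = H / 2 ^ L * 2 ^ k := by field_simp; linarith [hpow]

lemma div_four_le_sqrtSchedule {H : ℝ} {L : ℕ} (hH : 0 < H) (hL : logb 2 H < 2 ^ (L + 1)) :
    H / 4 ≤ sqrtSchedule H L := by
  calc H / 4 ≤ H / H ^ ((1 / 2 : ℝ) ^ L) := by
        gcongr
        exact rpow_half_pow_le_four hH hL
    _ = H ^ (1 - (1 / 2 : ℝ) ^ L) := by rw [rpow_sub hH, rpow_one]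
    _ ≤ sqrtSchedule H L := rpow_one_sub_half_pow_le_sqrtSchedule hH L

lemma sum_Icc_le_mul_two_pow {f : ℕ → ℝ} {C : ℝ} (hC : 0 ≤ C) {n : ℕ}
    (hf : ∀ k ∈ Icc 1 n, f k ≤ C * 2 ^ k) : ∑ k ∈ Icc 1 n, f k ≤ C * 2 ^ (n + 1) := by
  induction n with
  | zero => rw [Icc_eq_empty (by omega), sum_empty]; positivity
  | succ n ih =>
    rw [sum_Icc_succ_top (by omega)]
    have hn := ih fun k hk => hf k (Icc_subset_Icc_right (by omega) hk)
    have hlast := hf (n + 1) (by simp)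
    rw [pow_succ _ (n + 1)]
    linarith

lemma sum_sum_sqrtSchedule_le {H : ℝ} {L : ℕ} (hH : 4 ≤ H) (hL : 2 ^ L ≤ logb 2 H) :
    ∑ i ∈ Icc 1 L, ∑ k ∈ Icc 1 i, (sqrtSchedule H k : ℝ) ≤ 4 * H := by
  have hC : 0 ≤ H / 2 ^ L := by positivity
  have hinner : ∀ i ∈ Icc 1 L,
      ∑ k ∈ Icc 1 i, (sqrtSchedule H k : ℝ) ≤ 2 * (H / 2 ^ L) * 2 ^ i := by
    intro i hi
    calc ∑ k ∈ Icc 1 i, (sqrtSchedule H k : ℝ) ≤ H / 2 ^ L * 2 ^ (i + 1) :=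
          sum_Icc_le_mul_two_pow hC fun k hk =>
            sqrtSchedule_le_div_two_pow_mul hH hL ((mem_Icc.1 hk).2.trans (mem_Icc.1 hi).2)
      _ = 2 * (H / 2 ^ L) * 2 ^ i := by ring
  calc ∑ i ∈ Icc 1 L, ∑ k ∈ Icc 1 i, (sqrtSchedule H k : ℝ)
        ≤ 2 * (H / 2 ^ L) * 2 ^ (L + 1) :=
        sum_Icc_le_mul_two_pow (by positivity) hinner
    _ = 4 * H := by field_simp; ring

lemma roundBudget_le (K L : ℕ) (t : ℕ → ℕ) (hK : 1 ≤ K) :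
    roundBudget K L t ≤ K * ∑ i ∈ Icc 1 L, ∑ k ∈ Icc 1 i, t k := by
  rw [roundBudget, mul_sum]
  refine sum_le_sum fun i hi => ?_
  have hti : t i ≤ ∑ k ∈ Icc 1 i, t k :=
    single_le_sum (fun _ _ => Nat.zero_le _) (mem_Icc.2 ⟨(mem_Icc.1 hi).1, le_rfl⟩)
  calc t i + (K - 1) * ∑ k ∈ Icc 1 i, t k ≤ (1 + (K - 1)) * ∑ k ∈ Icc 1 i, t k := by
        rw [add_mul, one_mul]; gcongr
    _ = K * ∑ k ∈ Icc 1 i, t k := by rw [Nat.add_sub_cancel' hK]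

lemma mul_le_roundBudget (K : ℕ) {L : ℕ} (t : ℕ → ℕ) (hL : 1 ≤ L) :
    K * t L ≤ roundBudget K L t := by
  have hmem : L ∈ Icc 1 L := mem_Icc.2 ⟨hL, le_rfl⟩
  calc K * t L ≤ t L + (K - 1) * t L := by
        rw [← one_add_mul]; exact Nat.mul_le_mul_right _ (by omega)
    _ ≤ t L + (K - 1) * ∑ k ∈ Icc 1 L, t k := by
        gcongr; exact single_le_sum (fun _ _ => Nat.zero_le _) hmem
    _ ≤ roundBudget K L t :=
        single_le_sum (f := fun i => t i + (K - 1) * ∑ k ∈ Icc 1 i, t k)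
          (fun _ _ => Nat.zero_le _) hmem

lemma eq_sqrtSchedule {H : ℝ} {t : ℕ → ℕ} (ht0 : t 0 = 1)
    (ht : ∀ i : ℕ, 1 ≤ i → t i = ⌈√(H * t (i - 1))⌉₊) : t = sqrtSchedule H := by
  funext i
  induction i with
  | zero => exact ht0
  | succ i ih => rw [ht (i + 1) (by omega), Nat.add_sub_cancel, ih, sqrtSchedule]

lemma floor_logb_bounds {g : ℝ} (hg : 1 ≤ g) :
    (2 : ℝ) ^ ⌊logb 2 g⌋₊ ≤ g ∧ g < 2 ^ (⌊logb 2 g⌋₊ + 1) := by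
  have hg0 : 0 < g := by linarith
  constructor
  · rw [← rpow_natCast, ← le_logb_iff_rpow_le one_lt_two hg0]
    exact Nat.floor_le (logb_nonneg one_lt_two hg)
  · rw [← rpow_natCast, ← logb_lt_iff_lt_rpow one_lt_two hg0, Nat.cast_add_one]
    exact Nat.lt_floor_add_one _

/-- Let `K ≥ 2`, `T ≥ 40K`, `H := T/(10K)` (so `H ≥ 4`), with the integer
schedule `t_0 = 1`, `t_i = ⌈√(H·t_{i−1})⌉` and `L := ⌊log₂ log₂ H⌋`.  Define
`N_main := Σ_{i=1}^{L} ( t_i + (K−1)·Σ_{k=1}^{i} t_k )`.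
Then `T/40 ≤ N_main ≤ 3T/5`; in particular `2T/5 ≤ T − N_main ≤ 39T/40`. -/
theorem stmt19_round_budget (K T : ℕ) (hK : 2 ≤ K) (hT : 40 * K ≤ T)
    (H : ℝ) (hH : H = (T : ℝ) / (10 * K))
    (t : ℕ → ℕ) (ht0 : t 0 = 1)
    (ht : ∀ i : ℕ, 1 ≤ i → t i = ⌈Real.sqrt (H * t (i - 1))⌉₊)
    (L : ℕ) (hL : L = ⌊Real.logb 2 (Real.logb 2 H)⌋₊)
    (Nmain : ℕ)
    (hN : Nmain = ∑ i ∈ Icc 1 L, (t i + (K - 1) * ∑ k ∈ Icc 1 i, t k)) :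
    ((T : ℝ) / 40 ≤ (Nmain : ℝ) ∧ (Nmain : ℝ) ≤ 3 * T / 5) ∧
    (2 * (T : ℝ) / 5 ≤ (T : ℝ) - (Nmain : ℝ) ∧ (T : ℝ) - (Nmain : ℝ) ≤ 39 * T / 40) := by
  have hKH : K * H = T / 10 := by rw [hH]; field_simp
  have hH4 : 4 ≤ H := by
    rw [hH, le_div_iff₀ (by positivity)]; exact_mod_cast (by omega : 4 * (10 * K) ≤ T)
  have hlogH : 2 ≤ logb 2 H := by
    rw [le_logb_iff_rpow_le one_lt_two (by linarith)]; norm_num; linarith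
  obtain ⟨hLlow, hLup⟩ := floor_logb_bounds (g := logb 2 H) (by linarith)
  rw [← hL] at hLlow hLup
  have hL1 : 1 ≤ L := by
    by_contra! h0
    rw [Nat.lt_one_iff.1 h0] at hLup
    norm_num at hLup; linarith
  rw [eq_sqrtSchedule ht0 ht] at hN
  have hupper : (Nmain : ℝ) ≤ K * (4 * H) :=
    calc (Nmain : ℝ) ≤ K * ∑ i ∈ Icc 1 L, ∑ k ∈ Icc 1 i, (sqrtSchedule H k : ℝ) := by
          rw [hN]; exact_mod_cast roundBudget_le K L _ (by omega)
      _ ≤ K * (4 * H) := by gcongr; exact sum_sum_sqrtSchedule_le hH4 hLlow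
  have hlower : K * (H / 4) ≤ (Nmain : ℝ) :=
    calc K * (H / 4) ≤ K * (sqrtSchedule H L : ℝ) := by
          gcongr; exact div_four_le_sqrtSchedule (by linarith) hLup
      _ ≤ Nmain := by rw [hN]; exact_mod_cast mul_le_roundBudget K _ hL1
  refine ⟨⟨?_, ?_⟩, ?_, ?_⟩ <;> linarith
end
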